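/- arXiv:2105.05895 — 10 statements merged into one kernel-verified Lean document; each statement's English description precedes it below -/
import Mathlib

section
/- For every u ∈ U, the solution set 𝕊(u) := {y ∈ L²(X) : y = S(Φ(y), u)} of the fixed-point problem (F) is nonempty. Moreover, there exist unique solutions m(u), M(u) ∈ 𝕊(u) such that every subsolution v of (F) with parameter u satisfies v ≤ M(u) and every supersolution v of (F) with parameter u satisfies m(u) ≤ v; in particular, m(u) ≤ y ≤ M(u) μ-a.e. for every y ∈ 𝕊(u). -/
open MeasureTheory Filter Topology ENNReal

namespace Stmt1Aux

variable {X : Type*} [MeasurableSpace X] {μ : Measure X}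

local notation "⟪" x ", " y "⟫" => @inner ℝ _ _ x y

lemma l2inner_eq (f g : Lp ℝ 2 μ) : ⟪f, g⟫ = ∫ x, f x * g x ∂μ := by
  rw [L2.inner_def]
  simp [RCLike.inner_apply, RCLike.conj_to_real]
  exact integral_congr_ae (Eventually.of_forall fun x => mul_comm _ _)

lemma mul_integrable (f g : Lp ℝ 2 μ) : Integrable (fun x => f x * g x) μ := by
  have := L2.integrable_inner (𝕜 := ℝ) f g
  simp [RCLike.inner_apply, RCLike.conj_to_real] at this
  exact this.congr (Eventually.of_forall fun x => mul_comm _ _)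

lemma inner_nonneg (f g : Lp ℝ 2 μ) (hf : 0 ≤ f) (hg : 0 ≤ g) : 0 ≤ ⟪f, g⟫ := by
  rw [l2inner_eq]
  refine integral_nonneg_of_ae ?_
  filter_upwards [(Lp.coeFn_nonneg f).2 hf, (Lp.coeFn_nonneg g).2 hg] with x h1 h2
  exact mul_nonneg h1 h2

/-- From `⟪a ⊔ m, b⟫ ≤ ⟪m, b⟫` with `a ≤ b`, `0 ≤ m`, `0 ≤ b`, deduce `a ≤ m`. -/
lemma le_of_inner_le (a m b : Lp ℝ 2 μ) (hb : 0 ≤ b) (hab : a ≤ b) (hm : 0 ≤ m)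
    (h : ⟪a ⊔ m, b⟫ ≤ ⟪m, b⟫) : a ≤ m := by
  set F : X → ℝ := fun x => (a ⊔ m : Lp ℝ 2 μ) x * b x - m x * b x with hF
  have hFint : Integrable F μ := (mul_integrable (a ⊔ m) b).sub (mul_integrable m b)
  have hF0 : 0 ≤ᵐ[μ] F := by
    filter_upwards [(Lp.coeFn_le m (a ⊔ m)).2 le_sup_right, (Lp.coeFn_nonneg b).2 hb]
      with x h1 h2
    simp only [Pi.zero_apply, F, sub_nonneg]
    exact mul_le_mul_of_nonneg_right h1 h2
  have hFI : ∫ x, F x ∂μ ≤ 0 := by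
    have : ∫ x, F x ∂μ = ⟪a ⊔ m, b⟫ - ⟪m, b⟫ := by
      rw [integral_sub (mul_integrable (a ⊔ m) b) (mul_integrable m b),
        l2inner_eq, l2inner_eq]
    rw [this]; linarith
  have hFz : F =ᵐ[μ] 0 := by
    have h1 : ∫ x, F x ∂μ = 0 :=
      le_antisymm hFI (integral_nonneg_of_ae hF0)
    exact (integral_eq_zero_iff_of_nonneg_ae hF0 hFint).1 h1
  rw [← Lp.coeFn_le]
  filter_upwards [hFz, Lp.coeFn_sup a m, (Lp.coeFn_le a b).2 hab,
    (Lp.coeFn_nonneg m).2 hm, (Lp.coeFn_nonneg b).2 hb] with x hz hs hab' hm' hb'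
  simp only [F, Pi.zero_apply, Pi.sup_apply] at hz hs
  rw [hs] at hz
  rcases eq_or_lt_of_le hb' with hb0 | hb0
  · exact hab'.trans (hb0 ▸ hm')
  · have : a x ⊔ m x = m x := by
      have := sub_eq_zero.1 hz
      exact mul_right_cancel₀ (ne_of_gt hb0) this
    calc a x ≤ a x ⊔ m x := le_sup_left
    _ = m x := this

/-- Least upper bound of a sup-closed subset of the order interval `[0, b]` in `L²`. -/
lemma exists_lub (b : Lp ℝ 2 μ) (hb : 0 ≤ b) (A : Set (Lp ℝ 2 μ)) (hne : A.Nonempty)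
    (h0 : ∀ a ∈ A, 0 ≤ a) (hab : ∀ a ∈ A, a ≤ b)
    (hsup : ∀ a ∈ A, ∀ a' ∈ A, a ⊔ a' ∈ A) :
    ∃ m : Lp ℝ 2 μ, 0 ≤ m ∧ m ≤ b ∧ (∀ a ∈ A, a ≤ m) ∧
      ∀ w, (∀ a ∈ A, a ≤ w) → m ≤ w := by
  haveI : Fact ((1 : ℝ≥0∞) ≤ 2) := ⟨one_le_two⟩
  set J : Lp ℝ 2 μ → ℝ := fun f => ⟪f, b⟫ with hJ
  -- J monotone on nonneg differences, bounded
  have hJmono : ∀ f g : Lp ℝ 2 μ, f ≤ g → J f ≤ J g := by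
    intro f g hfg
    have : 0 ≤ J g - J f := by
      have := inner_nonneg (g - f) b (by simpa using sub_nonneg.2 hfg) hb
      simpa [J, inner_sub_left] using this
    linarith
  set SS : Set ℝ := J '' A with hSS
  have hSSne : SS.Nonempty := hne.image _
  have hSSbdd : BddAbove SS := by
    refine ⟨‖b‖ * ‖b‖, ?_⟩
    rintro x ⟨a, haA, rfl⟩
    calc J a ≤ ‖a‖ * ‖b‖ := real_inner_le_norm a b
    _ ≤ ‖b‖ * ‖b‖ := by
        have hnorm : ‖a‖ ≤ ‖b‖ := by
          have h1 : |a| ≤ |b| := by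
            rw [abs_of_nonneg (h0 a haA), abs_of_nonneg hb]; exact hab a haA
          exact HasSolidNorm.solid h1
        exact mul_le_mul_of_nonneg_right hnorm (norm_nonneg b)
  set s : ℝ := sSup SS with hs
  -- choose approximating sequence
  have hchoice : ∀ n : ℕ, ∃ a ∈ A, s - 1 / (n + 1) < J a := by
    intro n
    have : s - 1 / (n + 1) < s := by
      have : (0:ℝ) < 1 / (n + 1) := by positivity
      linarith
    obtain ⟨x, ⟨a, haA, rfl⟩, hx⟩ := exists_lt_of_lt_csSup hSSne this
    exact ⟨a, haA, hx⟩
  choose f hfA hfJ using hchoice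
  -- monotone envelope
  set c : ℕ → Lp ℝ 2 μ := fun n => Nat.rec (f 0) (fun n cn => cn ⊔ f (n + 1)) n with hc
  have hcA : ∀ n, c n ∈ A := by
    intro n; induction n with
    | zero => exact hfA 0
    | succ n ih => exact hsup _ ih _ (hfA (n + 1))
  have hcmono : Monotone c :=
    monotone_nat_of_le_succ fun n => le_sup_left
  have hfc : ∀ n, f n ≤ c n := by
    intro n; cases n with
    | zero => exact le_rfl
    | succ n => exact le_sup_right
  have hc0 : ∀ n, 0 ≤ c n := fun n => h0 _ (hcA n)
  have hcb : ∀ n, c n ≤ b := fun n => hab _ (hcA n)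
  have hJcs : ∀ n, J (c n) ≤ s := fun n => le_csSup hSSbdd ⟨c n, hcA n, rfl⟩
  have hJc_lt : ∀ n, s - 1 / (n + 1) < J (c n) := fun n =>
    lt_of_lt_of_le (hfJ n) (hJmono _ _ (hfc n))
  have hJtend : Tendsto (fun n => J (c n)) atTop (𝓝 s) := by
    have h1 : Tendsto (fun n : ℕ => s - 1 / ((n : ℝ) + 1)) atTop (𝓝 s) := by
      have := tendsto_one_div_add_atTop_nhds_zero_nat (𝕜 := ℝ)
      simpa using (tendsto_const_nhds (x := s)).sub this
    exact tendsto_of_tendsto_of_tendsto_of_le_of_le h1 tendsto_const_nhds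
      (fun n => (hJc_lt n).le) hJcs
  -- Cauchy
  have hkey : ∀ p q, p ≤ q → ‖c q - c p‖ ^ 2 ≤ J (c q) - J (c p) := by
    intro p q hpq
    have h1 : (0:Lp ℝ 2 μ) ≤ c q - c p := sub_nonneg.2 (hcmono hpq)
    have h2 : c q - c p ≤ b := by
      calc c q - c p ≤ c q := sub_le_self _ (hc0 p)
      _ ≤ b := hcb q
    have h3 : 0 ≤ ⟪c q - c p, b - (c q - c p)⟫ :=
      inner_nonneg _ _ h1 (sub_nonneg.2 h2)
    have h4 : ⟪c q - c p, b⟫ = J (c q) - J (c p) := by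
      simp [J, inner_sub_left]
    have h5 : ⟪c q - c p, c q - c p⟫ = ‖c q - c p‖ ^ 2 :=
      real_inner_self_eq_norm_sq _
    rw [inner_sub_right, h4, h5] at h3
    linarith
  have hcauchy : CauchySeq c := by
    refine cauchySeq_of_le_tendsto_0 (fun N => Real.sqrt (s - J (c N))) ?_ ?_
    · intro p q N hp hq
      rcases le_total p q with h | h
      · rw [dist_eq_norm, norm_sub_rev]
        have h1 := hkey p q h
        have h2 : J (c q) - J (c p) ≤ s - J (c N) := by
          have := hJmono _ _ (hcmono hp); have := hJcs q; linarith [hJmono _ _ (hcmono hp)]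
        have h3 : ‖c q - c p‖ ^ 2 ≤ s - J (c N) := h1.trans h2
        calc ‖c q - c p‖ = Real.sqrt (‖c q - c p‖ ^ 2) := by
              rw [Real.sqrt_sq (norm_nonneg _)]
        _ ≤ Real.sqrt (s - J (c N)) := Real.sqrt_le_sqrt h3
      · rw [dist_eq_norm]
        have h1 := hkey q p h
        have h2 : J (c p) - J (c q) ≤ s - J (c N) := by
          have := hJmono _ _ (hcmono hq); have := hJcs p; linarith [hJmono _ _ (hcmono hq)]
        have h3 : ‖c p - c q‖ ^ 2 ≤ s - J (c N) := h1.trans h2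
        calc ‖c p - c q‖ = Real.sqrt (‖c p - c q‖ ^ 2) := by
              rw [Real.sqrt_sq (norm_nonneg _)]
        _ ≤ Real.sqrt (s - J (c N)) := Real.sqrt_le_sqrt h3
    · have h1 : Tendsto (fun N => s - J (c N)) atTop (𝓝 0) := by
        simpa using (tendsto_const_nhds (x := s)).sub hJtend
      have := (Real.continuous_sqrt.tendsto 0).comp h1
      simpa [Function.comp_def] using this
  obtain ⟨m, hm⟩ := cauchySeq_tendsto_of_complete hcauchy
  -- c n ≤ m
  have hcm : ∀ n, c n ≤ m := by
    intro n
    refine ge_of_tendsto hm ?_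
    filter_upwards [eventually_ge_atTop n] with k hk
    exact hcmono hk
  have hm0 : 0 ≤ m := (hc0 0).trans (hcm 0)
  have hmb : m ≤ b := le_of_tendsto hm (Eventually.of_forall hcb)
  have hJm : J m = s :=
    tendsto_nhds_unique (((hm.inner tendsto_const_nhds) : Tendsto (fun n => J (c n)) atTop (𝓝 (J m)))) hJtend
  refine ⟨m, hm0, hmb, ?_, ?_⟩
  · intro a haA
    -- J (a ⊔ m) ≤ s
    have hsupt : Tendsto (fun n => a ⊔ c n) atTop (𝓝 (a ⊔ m)) :=
      (tendsto_const_nhds (x := a)).sup_nhds hm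
    have hJsup : J (a ⊔ m) ≤ s := by
      refine le_of_tendsto (hsupt.inner tendsto_const_nhds) ?_
      filter_upwards with n
      exact le_csSup hSSbdd ⟨a ⊔ c n, hsup a haA _ (hcA n), rfl⟩
    exact le_of_inner_le a m b hb (hab a haA) hm0 (by rw [← hJm] at hJsup; exact hJsup)
  · intro w hw
    exact le_of_tendsto hm (Eventually.of_forall fun n => hw _ (hcA n))

end Stmt1Aux

-- re-open namespace content
namespace Stmt1Aux2
open Stmt1Aux

variable {X : Type*} [MeasurableSpace X] {μ : Measure X}

lemma exists_glb (b : Lp ℝ 2 μ) (hb : 0 ≤ b) (B : Set (Lp ℝ 2 μ)) (hne : B.Nonempty)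
    (hB0 : ∀ v ∈ B, 0 ≤ v) (hBb : ∀ v ∈ B, v ≤ b)
    (hinf : ∀ v ∈ B, ∀ v' ∈ B, v ⊓ v' ∈ B) :
    ∃ m : Lp ℝ 2 μ, (∀ v ∈ B, m ≤ v) ∧ ∀ w, (∀ v ∈ B, w ≤ v) → w ≤ m := by
  have h0 : ∀ a ∈ (fun v => b - v) '' B, 0 ≤ a := by
    rintro _ ⟨v, hv, rfl⟩
    exact sub_nonneg.2 (hBb v hv)
  have hab : ∀ a ∈ (fun v => b - v) '' B, a ≤ b := by
    rintro _ ⟨v, hv, rfl⟩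
    exact sub_le_self _ (hB0 v hv)
  have hsup : ∀ a ∈ (fun v => b - v) '' B, ∀ a' ∈ (fun v => b - v) '' B,
      a ⊔ a' ∈ (fun v => b - v) '' B := by
    rintro _ ⟨v, hv, rfl⟩ _ ⟨w, hw, rfl⟩
    exact ⟨v ⊓ w, hinf v hv w hw, sub_inf v w b⟩
  obtain ⟨m', _, _, hub, hleast⟩ := Stmt1Aux.exists_lub b hb ((fun v => b - v) '' B)
    (hne.image _) h0 hab hsup
  refine ⟨b - m', ?_, ?_⟩
  · intro v hv
    exact sub_le_comm.1 (hub _ ⟨v, hv, rfl⟩)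
  · intro w hw
    have h1 : ∀ a ∈ (fun v => b - v) '' B, a ≤ b - w := by
      rintro _ ⟨v, hv, rfl⟩
      exact sub_le_sub_left (hw v hv) b
    exact le_sub_comm.1 (hleast _ h1)

end Stmt1Aux2

/-- Theorem 2.5 of the paper, Birkhoff–Tartar: solvability of the
fixed-point problem (F) and existence of unique minimal and maximal solutions. -/
theorem stmt_1
    {X : Type*} [MeasurableSpace X] {μ : Measure X} [μ.IsComplete]
    {Pbar : Type*} [PartialOrder Pbar] [Nontrivial Pbar]
    (pbar : Pbar) (hpbar : ∀ p : Pbar, p ≤ pbar)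
    {U : Type*} [Nonempty U]
    (S : Pbar → U → Lp ℝ 2 μ)
    (hS_nonneg : ∀ p u, 0 ≤ S p u)
    (hS_mono : ∀ u, ∀ p₁ p₂ : Pbar, p₁ ≤ p₂ → S p₁ u ≤ S p₂ u)
    (Φ : Lp ℝ 2 μ → Pbar)
    (hΦ_ne : ∀ v, Φ v ≠ pbar)
    (hΦ_mono : ∀ v₁ v₂ : Lp ℝ 2 μ, v₁ ≤ v₂ → Φ v₁ ≤ Φ v₂)
    (u : U) :
    (∃ y : Lp ℝ 2 μ, y = S (Φ y) u) ∧
    (∃! M : Lp ℝ 2 μ, M = S (Φ M) u ∧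
      ∀ v : Lp ℝ 2 μ, v ≤ S (Φ v) u → v ≤ M) ∧
    (∃! m : Lp ℝ 2 μ, m = S (Φ m) u ∧
      ∀ v : Lp ℝ 2 μ, S (Φ v) u ≤ v → m ≤ v) ∧
    (∀ m M : Lp ℝ 2 μ,
      (m = S (Φ m) u ∧ ∀ v : Lp ℝ 2 μ, S (Φ v) u ≤ v → m ≤ v) →
      (M = S (Φ M) u ∧ ∀ v : Lp ℝ 2 μ, v ≤ S (Φ v) u → v ≤ M) →
      ∀ y : Lp ℝ 2 μ, y = S (Φ y) u → m ≤ y ∧ y ≤ M) := by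
  set b : Lp ℝ 2 μ := S pbar u with hbdef
  set T : Lp ℝ 2 μ → Lp ℝ 2 μ := fun v => S (Φ v) u with hTdef
  have hTmono : ∀ v w : Lp ℝ 2 μ, v ≤ w → T v ≤ T w :=
    fun v w h => hS_mono u _ _ (hΦ_mono v w h)
  have hT0 : ∀ v, 0 ≤ T v := fun v => hS_nonneg _ u
  have hTb : ∀ v, T v ≤ b := fun v => hS_mono u _ pbar (hpbar _)
  have hb0 : 0 ≤ b := hS_nonneg _ _
  -- maximal solution
  set A : Set (Lp ℝ 2 μ) := {v | v ≤ T v ∧ 0 ≤ v} with hAdef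
  obtain ⟨M, hM0, hMb, hMub, hMleast⟩ := Stmt1Aux.exists_lub b hb0 A
    ⟨0, hT0 0, le_rfl⟩ (fun a ha => ha.2) (fun a ha => ha.1.trans (hTb a))
    (fun a ha a' ha' => ⟨sup_le (ha.1.trans (hTmono a _ le_sup_left))
      (ha'.1.trans (hTmono a' _ le_sup_right)), le_sup_of_le_left ha.2⟩)
  have hMsub : M ≤ T M :=
    hMleast (T M) (fun a ha => ha.1.trans (hTmono a M (hMub a ha)))
  have hMfix : M = T M :=
    le_antisymm hMsub (hMub (T M) ⟨hTmono _ _ hMsub, hT0 _⟩)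
  have hMmax : ∀ v : Lp ℝ 2 μ, v ≤ T v → v ≤ M := by
    intro v hv
    have hmem : v ⊔ 0 ∈ A :=
      ⟨sup_le (hv.trans (hTmono v (v ⊔ 0) le_sup_left)) (hT0 _), le_sup_right⟩
    exact le_sup_left.trans (hMub _ hmem)
  -- minimal solution
  set B : Set (Lp ℝ 2 μ) := {v | T v ≤ v ∧ v ≤ b} with hBdef
  obtain ⟨m, hmlb, hmglb⟩ := Stmt1Aux2.exists_glb b hb0 B
    ⟨b, hTb b, le_rfl⟩ (fun v hv => (hT0 v).trans hv.1) (fun v hv => hv.2)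
    (fun v hv v' hv' => ⟨le_inf ((hTmono _ _ inf_le_left).trans hv.1)
      ((hTmono _ _ inf_le_right).trans hv'.1), inf_le_of_left_le hv.2⟩)
  have hmsup : T m ≤ m :=
    hmglb (T m) (fun v hv => (hTmono m v (hmlb v hv)).trans hv.1)
  have hmfix : m = T m :=
    le_antisymm (hmlb (T m) ⟨hTmono _ _ hmsup, hTb _⟩) hmsup
  have hmmin : ∀ v : Lp ℝ 2 μ, T v ≤ v → m ≤ v := by
    intro v hv
    have hmem : v ⊓ b ∈ B :=
      ⟨le_inf ((hTmono _ _ inf_le_left).trans hv) (hTb _), inf_le_right⟩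
    exact (hmlb _ hmem).trans inf_le_left
  refine ⟨⟨M, hMfix⟩, ⟨M, ⟨hMfix, hMmax⟩, ?_⟩, ⟨m, ⟨hmfix, hmmin⟩, ?_⟩, ?_⟩
  · rintro M' ⟨h1, h2⟩
    exact le_antisymm (hMmax M' h1.le) (h2 M hMfix.le)
  · rintro m' ⟨h1, h2⟩
    exact le_antisymm (h2 m hmfix.ge) (hmmin m' h1.ge)
  · rintro m' M' ⟨hm1, hm2⟩ ⟨hM1, hM2⟩ y hy
    exact ⟨hm2 y hy.ge, hM2 y hy.le⟩
end

section
/- Suppose Assumption (L) holds and let q ∈ [1, ∞] be an exponent such that S(p, u) ∈ L^q(X) for all p ∈ P and all u ∈ U. Then for every u ∈ U satisfying u ≥ c η-a.e. in Y for some constant c > 0 and every v ∈ U satisfying ‖u − v‖_{L^∞(Y)} ≤ c − ρ for some 0 < ρ < c, the maximal solutions M(u) and M(v) of the fixed-point problem (F) associated with u and v satisfy ‖M(u) − M(v)‖_{L^q(X)} ≤ (1/ρ) ‖M(u)‖_{L^q(X)} ‖u − v‖_{L^∞(Y)}. -/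
open MeasureTheory Filter Topology ENNReal

/-- Theorem 3.2 of the paper, maximal solutions: Lipschitz stability
estimate for the maximal solution map `M` of the fixed-point problem (F) under
Assumption (L). -/
theorem stmt_2
    {X : Type*} [MeasurableSpace X] {μ : Measure X} [μ.IsComplete]
    {Y : Type*} [MeasurableSpace Y] {η : Measure Y} [η.IsComplete]
    {V : Type*} [AddCommGroup V] [PartialOrder V] [Module ℝ V]
    (P : Set V)
    (hP_scale : ∀ p ∈ P, ∀ lam : ℝ, lam ∈ Set.Ioc (0 : ℝ) 1 → lam • p ∈ P)
    (U : Set (Lp ℝ ⊤ η))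
    (hU_nonneg : ∀ u ∈ U, 0 ≤ u)
    (hU_scale : ∀ u ∈ U, ∀ lam : ℝ, lam ∈ Set.Ioc (0 : ℝ) 1 → lam • u ∈ U)
    (S : V → Lp ℝ ⊤ η → Lp ℝ 2 μ)
    (hS_nonneg : ∀ p : V, ∀ u ∈ U, 0 ≤ S p u)
    (hS_mono_p : ∀ u ∈ U, ∀ p₁ p₂ : V, p₁ ≤ p₂ → S p₁ u ≤ S p₂ u)
    (hS_mono_u : ∀ p ∈ P, ∀ u₁ ∈ U, ∀ u₂ ∈ U, u₁ ≤ u₂ → S p u₁ ≤ S p u₂)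
    (hS_superhom : ∀ p ∈ P, ∀ u ∈ U, ∀ lam : ℝ, lam ∈ Set.Ioc (0 : ℝ) 1 →
      lam • S p u ≤ S (lam • p) (lam • u))
    (Φ : Lp ℝ 2 μ → V)
    (hΦ_mem : ∀ v, Φ v ∈ P)
    (hΦ_mono : ∀ v₁ v₂ : Lp ℝ 2 μ, v₁ ≤ v₂ → Φ v₁ ≤ Φ v₂)
    (hΦ_superhom : ∀ v : Lp ℝ 2 μ, 0 ≤ v → ∀ lam : ℝ, lam ∈ Set.Ioc (0 : ℝ) 1 →
      lam • Φ v ≤ Φ (lam • v))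
    (q : ℝ≥0∞) (hq1 : 1 ≤ q)
    (hSq : ∀ p ∈ P, ∀ u ∈ U, MemLp (⇑(S p u)) q μ)
    (M : Lp ℝ ⊤ η → Lp ℝ 2 μ)
    (hM_sol : ∀ u ∈ U, M u = S (Φ (M u)) u)
    (hM_max : ∀ u ∈ U, ∀ v : Lp ℝ 2 μ, v ≤ S (Φ v) u → v ≤ M u)
    (u v : Lp ℝ ⊤ η) (hu : u ∈ U) (hv : v ∈ U)
    (c ρ : ℝ) (hρ : 0 < ρ) (hρc : ρ < c)
    (huc : ∀ᵐ y ∂η, c ≤ u y)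
    (huv : ‖u - v‖ ≤ c - ρ) :
    eLpNorm (⇑(M u - M v)) q μ ≤
      ENNReal.ofReal (ρ⁻¹ * ‖u - v‖) * eLpNorm (⇑(M u)) q μ := by
  set d : ℝ := ‖u - v‖ with hd
  have hd0 : 0 ≤ d := norm_nonneg _
  have hc : (0 : ℝ) < c := hρ.trans hρc
  -- nonnegativity of maximal solutions
  have hMnn : ∀ w ∈ U, 0 ≤ M w := by
    intro w hw
    rw [hM_sol w hw]
    exact hS_nonneg _ w hw
  -- key comparison lemma: if lam • u' ≤ w then lam • M u' ≤ M w
  have key : ∀ u' ∈ U, ∀ w ∈ U, ∀ lam : ℝ, lam ∈ Set.Ioc (0 : ℝ) 1 →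
      lam • u' ≤ w → lam • M u' ≤ M w := by
    intro u' hu' w hw lam hlam hle
    apply hM_max w hw
    have h1 : lam • M u' = lam • S (Φ (M u')) u' := by rw [← hM_sol u' hu']
    have h2 : lam • S (Φ (M u')) u' ≤ S (lam • Φ (M u')) (lam • u') :=
      hS_superhom _ (hΦ_mem _) u' hu' lam hlam
    have h3 : S (lam • Φ (M u')) (lam • u') ≤ S (Φ (lam • M u')) (lam • u') :=
      hS_mono_p _ (hU_scale u' hu' lam hlam) _ _
        (hΦ_superhom _ (hMnn u' hu') lam hlam)
    have h4 : S (Φ (lam • M u')) (lam • u') ≤ S (Φ (lam • M u')) w :=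
      hS_mono_u _ (hΦ_mem _) _ (hU_scale u' hu' lam hlam) _ hw hle
    calc lam • M u' = lam • S (Φ (M u')) u' := h1
      _ ≤ _ := h2.trans (h3.trans h4)
  -- a.e. bound on |u - v|
  have hbound : ∀ᵐ y ∂η, |u y - v y| ≤ d := by
    have h1 : ∀ᵐ y ∂η, ‖(u - v) y‖₊ ≤ eLpNormEssSup (⇑(u - v)) η :=
      ae_le_eLpNormEssSup
    filter_upwards [h1, Lp.coeFn_sub u v] with y hy hy2
    have hfin : eLpNorm (⇑(u - v)) ⊤ η ≠ ⊤ := Lp.eLpNorm_ne_top _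
    rw [eLpNorm_exponent_top] at hfin
    have : ((‖(u - v) y‖₊ : ℝ≥0∞)).toReal ≤ (eLpNormEssSup (⇑(u - v)) η).toReal :=
      ENNReal.toReal_mono hfin hy
    simp only [ENNReal.coe_toReal, coe_nnnorm] at this
    rw [hy2] at this
    calc |u y - v y| = ‖(u - v : Y → ℝ) y‖ := by simp [Real.norm_eq_abs]
      _ ≤ _ := this
      _ = d := by rw [hd, Lp.norm_def, eLpNorm_exponent_top]
  set lam₁ : ℝ := ρ / (ρ + d) with hlam₁
  set lam₂ : ℝ := c / (c + d) with hlam₂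
  have hρd : (0:ℝ) < ρ + d := by linarith
  have hcd : (0:ℝ) < c + d := by linarith
  have hlam₁m : lam₁ ∈ Set.Ioc (0:ℝ) 1 :=
    ⟨div_pos hρ hρd, div_le_one_of_le₀ (by linarith) hρd.le⟩
  have hlam₂m : lam₂ ∈ Set.Ioc (0:ℝ) 1 :=
    ⟨div_pos hc hcd, div_le_one_of_le₀ (by linarith) hcd.le⟩
  -- lam₁ • u ≤ v
  have h1uv : lam₁ • u ≤ v := by
    rw [← Lp.coeFn_le]
    filter_upwards [Lp.coeFn_smul lam₁ u, hbound, huc] with y hy hb hcy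
    rw [hy]
    simp only [Pi.smul_apply, smul_eq_mul]
    have h1 : u y - v y ≤ d := (abs_le.mp hb).2
    have h2 : ρ + d ≤ u y := by linarith
    rw [hlam₁, div_mul_eq_mul_div, div_le_iff₀ hρd]
    nlinarith
  -- lam₂ • v ≤ u
  have h2vu : lam₂ • v ≤ u := by
    rw [← Lp.coeFn_le]
    filter_upwards [Lp.coeFn_smul lam₂ v, hbound, huc] with y hy hb hcy
    rw [hy]
    simp only [Pi.smul_apply, smul_eq_mul]
    have h1 : v y - u y ≤ d := by have := (abs_le.mp hb).1; linarith
    rw [hlam₂, div_mul_eq_mul_div, div_le_iff₀ hcd]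
    nlinarith
  have hMuv : lam₁ • M u ≤ M v := key u hu v hv lam₁ hlam₁m h1uv
  have hMvu : lam₂ • M v ≤ M u := key v hv u hu lam₂ hlam₂m h2vu
  -- pointwise estimate
  have hae : ∀ᵐ x ∂μ, ‖(M u - M v) x‖ ≤ ‖((ρ⁻¹ * d) • ⇑(M u)) x‖ := by
    have h1 := (Lp.coeFn_le _ _).mpr hMuv
    have h2 := (Lp.coeFn_le _ _).mpr hMvu
    have h3 := (Lp.coeFn_le _ _).mpr (hMnn u hu)
    have h4 := (Lp.coeFn_le _ _).mpr (hMnn v hv)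
    filter_upwards [h1, h2, h3, h4, Lp.coeFn_sub (M u) (M v),
      Lp.coeFn_smul lam₁ (M u), Lp.coeFn_smul lam₂ (M v),
      Lp.coeFn_zero ℝ 2 μ, Lp.coeFn_zero ℝ 2 μ] with x k1 k2 k3 k4 k5 k6 k7 k8 _
    rw [k6] at k1
    rw [k7] at k2
    rw [k8] at k3 k4
    simp only [Pi.smul_apply, smul_eq_mul, Pi.zero_apply] at k1 k2 k3 k4 ⊢
    rw [k5]
    simp only [Pi.sub_apply, Real.norm_eq_abs]
    set a := M u x
    set b := M v x
    -- lam₁ * a ≤ b, lam₂ * b ≤ a, 0 ≤ a, 0 ≤ b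
    have ha : a - b ≤ ρ⁻¹ * d * a := by
      have : (1 - lam₁) * a ≥ a - b := by linarith
      have hl : 1 - lam₁ = d / (ρ + d) := by
        rw [hlam₁]
        field_simp
        ring
      have : a - b ≤ d / (ρ + d) * a := by rw [← hl]; linarith
      have hle : d / (ρ + d) * a ≤ ρ⁻¹ * d * a := by
        apply mul_le_mul_of_nonneg_right _ k3
        rw [div_le_iff₀ hρd, inv_mul_eq_div, div_mul_eq_mul_div, le_div_iff₀ hρ]
        nlinarith
      linarith
    have hb2 : b - a ≤ ρ⁻¹ * d * a := by
      have hb' : b ≤ (c + d) / c * a := by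
        have hkey2 : lam₂ * ((c + d) / c * a - b) = a - lam₂ * b := by
          rw [hlam₂]; field_simp
        have h0 : 0 ≤ lam₂ * ((c + d) / c * a - b) := by rw [hkey2]; linarith
        have := (mul_nonneg_iff_of_pos_left hlam₂m.1).mp h0
        linarith
      have : b - a ≤ d / c * a := by
        have : (c + d) / c * a - a = d / c * a := by field_simp; ring
        linarith
      have hle : d / c * a ≤ ρ⁻¹ * d * a := by
        apply mul_le_mul_of_nonneg_right _ k3
        rw [div_le_iff₀ hc, inv_mul_eq_div, div_mul_eq_mul_div, le_div_iff₀ hρ]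
        nlinarith
      linarith
    have habs : |a - b| ≤ ρ⁻¹ * d * a := abs_le.mpr ⟨by linarith, ha⟩
    calc |a - b| ≤ ρ⁻¹ * d * a := habs
      _ ≤ |ρ⁻¹ * d * a| := le_abs_self _
  calc eLpNorm (⇑(M u - M v)) q μ ≤ eLpNorm ((ρ⁻¹ * d) • ⇑(M u)) q μ :=
        eLpNorm_mono_ae hae
    _ = ‖ρ⁻¹ * d‖₊ * eLpNorm (⇑(M u)) q μ := eLpNorm_const_smul _ _ _ _
    _ = ENNReal.ofReal (ρ⁻¹ * d) * eLpNorm (⇑(M u)) q μ := by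
        rw [← enorm_eq_nnnorm, Real.enorm_eq_ofReal (by positivity)]
end

section
/- Suppose Assumption (L) holds and let q ∈ [1, ∞] be an exponent such that S(p, u) ∈ L^q(X) for all p ∈ P and all u ∈ U. Then for every u ∈ U satisfying u ≥ c η-a.e. in Y for some constant c > 0 and every v ∈ U satisfying ‖u − v‖_{L^∞(Y)} ≤ c − ρ for some 0 < ρ < c, the minimal solutions m(u) and m(v) of the fixed-point problem (F) associated with u and v satisfy ‖m(u) − m(v)‖_{L^q(X)} ≤ (1/ρ) ‖m(u)‖_{L^q(X)} ‖u − v‖_{L^∞(Y)}. -/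
open MeasureTheory Filter Topology ENNReal

/-- Theorem 3.2 of the paper, minimal solutions: Lipschitz stability
estimate for the minimal solution map `m` of the fixed-point problem (F) under
Assumption (L). -/
theorem stmt_3
    {X : Type*} [MeasurableSpace X] {μ : Measure X} [μ.IsComplete]
    {Y : Type*} [MeasurableSpace Y] {η : Measure Y} [η.IsComplete]
    {V : Type*} [AddCommGroup V] [PartialOrder V] [Module ℝ V]
    (P : Set V)
    (hP_scale : ∀ p ∈ P, ∀ lam : ℝ, lam ∈ Set.Ioc (0 : ℝ) 1 → lam • p ∈ P)
    (U : Set (Lp ℝ ⊤ η))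
    (hU_nonneg : ∀ u ∈ U, 0 ≤ u)
    (hU_scale : ∀ u ∈ U, ∀ lam : ℝ, lam ∈ Set.Ioc (0 : ℝ) 1 → lam • u ∈ U)
    (S : V → Lp ℝ ⊤ η → Lp ℝ 2 μ)
    (hS_nonneg : ∀ p : V, ∀ u ∈ U, 0 ≤ S p u)
    (hS_mono_p : ∀ u ∈ U, ∀ p₁ p₂ : V, p₁ ≤ p₂ → S p₁ u ≤ S p₂ u)
    (hS_mono_u : ∀ p ∈ P, ∀ u₁ ∈ U, ∀ u₂ ∈ U, u₁ ≤ u₂ → S p u₁ ≤ S p u₂)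
    (hS_superhom : ∀ p ∈ P, ∀ u ∈ U, ∀ lam : ℝ, lam ∈ Set.Ioc (0 : ℝ) 1 →
      lam • S p u ≤ S (lam • p) (lam • u))
    (Φ : Lp ℝ 2 μ → V)
    (hΦ_mem : ∀ v, Φ v ∈ P)
    (hΦ_mono : ∀ v₁ v₂ : Lp ℝ 2 μ, v₁ ≤ v₂ → Φ v₁ ≤ Φ v₂)
    (hΦ_superhom : ∀ v : Lp ℝ 2 μ, 0 ≤ v → ∀ lam : ℝ, lam ∈ Set.Ioc (0 : ℝ) 1 →
      lam • Φ v ≤ Φ (lam • v))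
    (q : ℝ≥0∞) (hq1 : 1 ≤ q)
    (hSq : ∀ p ∈ P, ∀ u ∈ U, MemLp (⇑(S p u)) q μ)
    (m : Lp ℝ ⊤ η → Lp ℝ 2 μ)
    (hm_sol : ∀ u ∈ U, m u = S (Φ (m u)) u)
    (hm_min : ∀ u ∈ U, ∀ v : Lp ℝ 2 μ, S (Φ v) u ≤ v → m u ≤ v)
    (u v : Lp ℝ ⊤ η) (hu : u ∈ U) (hv : v ∈ U)
    (c ρ : ℝ) (hρ : 0 < ρ) (hρc : ρ < c)
    (huc : ∀ᵐ y ∂η, c ≤ u y)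
    (huv : ‖u - v‖ ≤ c - ρ) :
    eLpNorm (⇑(m u - m v)) q μ ≤
      ENNReal.ofReal (ρ⁻¹ * ‖u - v‖) * eLpNorm (⇑(m u)) q μ := by

  classical
  set δ : ℝ := ‖u - v‖ with hδdef
  have hδ0 : 0 ≤ δ := norm_nonneg _
  have hρδ : 0 < ρ + δ := by linarith
  -- helper: smul monotonicity in Lp order
  have smul_mono : ∀ (t : ℝ), 0 ≤ t → ∀ f g : Lp ℝ 2 μ, f ≤ g → t • f ≤ t • g := by
    intro t ht f g hfg
    rw [← Lp.coeFn_le] at hfg ⊢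
    filter_upwards [hfg, Lp.coeFn_smul t f, Lp.coeFn_smul t g] with x h1 h2 h3
    rw [h2, h3]
    simp only [Pi.smul_apply, smul_eq_mul]
    exact mul_le_mul_of_nonneg_left h1 ht
  -- key comparison lemma
  have key : ∀ w₁ ∈ U, ∀ w₂ ∈ U, ∀ lam : ℝ, lam ∈ Set.Ioc (0:ℝ) 1 → lam • w₁ ≤ w₂ →
      lam • m w₁ ≤ m w₂ := by
    intro w₁ hw₁ w₂ hw₂ lam hlam hle
    have hlam0 : (0:ℝ) < lam := hlam.1
    set w : Lp ℝ 2 μ := lam⁻¹ • m w₂ with hwdef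
    have hmw₂ : m w₂ = S (Φ (m w₂)) w₂ := hm_sol w₂ hw₂
    have hm₂pos : (0 : Lp ℝ 2 μ) ≤ m w₂ := by
      rw [hmw₂]; exact hS_nonneg _ w₂ hw₂
    have hwpos : (0 : Lp ℝ 2 μ) ≤ w := by
      have := smul_mono lam⁻¹ (by positivity) 0 (m w₂) hm₂pos
      rwa [smul_zero] at this
    have hlw : lam • w = m w₂ := smul_inv_smul₀ (ne_of_gt hlam0) (m w₂)
    have hsuper : S (Φ w) w₁ ≤ w := by
      have h1 : lam • S (Φ w) w₁ ≤ S (lam • Φ w) (lam • w₁) :=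
        hS_superhom _ (hΦ_mem w) w₁ hw₁ lam hlam
      have h2 : S (lam • Φ w) (lam • w₁) ≤ S (Φ (lam • w)) (lam • w₁) :=
        hS_mono_p (lam • w₁) (hU_scale w₁ hw₁ lam hlam) _ _ (hΦ_superhom w hwpos lam hlam)
      have h3 : S (Φ (lam • w)) (lam • w₁) ≤ S (Φ (lam • w)) w₂ :=
        hS_mono_u _ (hΦ_mem _) _ (hU_scale w₁ hw₁ lam hlam) _ hw₂ hle
      have h4 : lam • S (Φ w) w₁ ≤ m w₂ := by
        have := (h1.trans h2).trans h3
        rwa [hlw, ← hmw₂] at this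
      have := smul_mono lam⁻¹ (by positivity) _ _ h4
      rwa [inv_smul_smul₀ (ne_of_gt hlam0)] at this
    have hmin := hm_min w₁ hw₁ w hsuper
    calc lam • m w₁ ≤ lam • w := smul_mono lam hlam0.le _ _ hmin
      _ = m w₂ := hlw
  -- a.e. bound from the L∞ norm
  have hab : ∀ᵐ y ∂η, |u y - v y| ≤ δ := by
    have h1 := enorm_ae_le_eLpNormEssSup (⇑(u - v)) η
    have hne : eLpNormEssSup (⇑(u - v)) η ≠ ⊤ := by
      have := Lp.eLpNorm_ne_top (u - v)
      rwa [eLpNorm_exponent_top] at this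
    have hnorm : δ = (eLpNormEssSup (⇑(u - v)) η).toReal := by
      rw [hδdef, Lp.norm_def, eLpNorm_exponent_top]
    filter_upwards [h1, Lp.coeFn_sub u v] with y hy hy2
    have : ((‖(u - v) y‖₊ : ℝ≥0∞)).toReal ≤ (eLpNormEssSup (⇑(u - v)) η).toReal :=
      ENNReal.toReal_mono hne hy
    rw [ENNReal.coe_toReal, coe_nnnorm, Real.norm_eq_abs] at this
    rw [hy2] at this
    simpa [hnorm] using this
  set lam : ℝ := ρ / (ρ + δ) with hlamdef
  have hlam : lam ∈ Set.Ioc (0:ℝ) 1 := by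
    constructor
    · positivity
    · rw [hlamdef, div_le_one hρδ]; linarith
  have hcρδ : ρ + δ ≤ c := by
    have : δ ≤ c - ρ := huv
    linarith
  -- the two order comparisons in L∞
  have h_lu_v : lam • u ≤ v := by
    rw [← Lp.coeFn_le]
    filter_upwards [hab, huc, Lp.coeFn_smul lam u] with y h1 h2 h3
    rw [h3]
    simp only [Pi.smul_apply, smul_eq_mul]
    have habs := abs_le.mp h1
    have huy : ρ + δ ≤ u y := le_trans hcρδ h2
    rw [hlamdef, div_mul_eq_mul_div, div_le_iff₀ hρδ]
    nlinarith [mul_nonneg hδ0 (le_trans (by linarith : (0:ℝ) ≤ ρ + δ) huy)]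
  have h_lv_u : lam • v ≤ u := by
    rw [← Lp.coeFn_le]
    filter_upwards [hab, huc, Lp.coeFn_smul lam v] with y h1 h2 h3
    rw [h3]
    simp only [Pi.smul_apply, smul_eq_mul]
    have habs := abs_le.mp h1
    have huy : ρ + δ ≤ u y := le_trans hcρδ h2
    rw [hlamdef, div_mul_eq_mul_div, div_le_iff₀ hρδ]
    nlinarith [mul_nonneg hδ0 (le_trans (by linarith : (0:ℝ) ≤ ρ + δ) huy)]
  have hA : lam • m u ≤ m v := key u hu v hv lam hlam h_lu_v
  have hB : lam • m v ≤ m u := key v hv u hu lam hlam h_lv_u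
  have hmu_pos : (0 : Lp ℝ 2 μ) ≤ m u := by
    rw [hm_sol u hu]; exact hS_nonneg _ u hu
  have hmv_pos : (0 : Lp ℝ 2 μ) ≤ m v := by
    rw [hm_sol v hv]; exact hS_nonneg _ v hv
  -- pointwise bound
  have hptw : ∀ᵐ x ∂μ, ‖(m u - m v) x‖ ≤ ‖((ρ⁻¹ * δ) • ⇑(m u)) x‖ := by
    rw [← Lp.coeFn_le] at hA hB
    rw [← Lp.coeFn_nonneg] at hmu_pos hmv_pos
    filter_upwards [hA, hB, Lp.coeFn_smul lam (m u), Lp.coeFn_smul lam (m v),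
      Lp.coeFn_sub (m u) (m v), hmu_pos, hmv_pos] with x h1 h2 h3 h4 h5 h6 h7
    rw [h3] at h1
    rw [h4] at h2
    simp only [Pi.smul_apply, smul_eq_mul, Pi.zero_apply] at h1 h2 h6 h7
    rw [h5]
    simp only [Pi.sub_apply, Pi.smul_apply, smul_eq_mul]
    set a := (m u) x
    set b := (m v) x
    rw [hlamdef, div_mul_eq_mul_div, div_le_iff₀ hρδ] at h1 h2
    have hbound : |a - b| ≤ ρ⁻¹ * δ * a := by
      rw [abs_le]
      constructor
      · rw [neg_le, ← mul_le_mul_iff_right₀ hρ]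
        have : ρ * (ρ⁻¹ * δ * a) = δ * a := by field_simp
        rw [mul_comm ρ (-(a-b)), this]
        nlinarith [mul_nonneg hδ0 h6]
      · rw [← mul_le_mul_iff_right₀ hρ]
        have : ρ * (ρ⁻¹ * δ * a) = δ * a := by field_simp
        rw [this]
        nlinarith [mul_nonneg hδ0 h6, mul_nonneg hδ0 h7]
    calc ‖a - b‖ = |a - b| := Real.norm_eq_abs _
      _ ≤ ρ⁻¹ * δ * a := hbound
      _ ≤ |ρ⁻¹ * δ * a| := le_abs_self _
      _ = ‖ρ⁻¹ * δ * a‖ := (Real.norm_eq_abs _).symm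
  calc eLpNorm (⇑(m u - m v)) q μ ≤ eLpNorm ((ρ⁻¹ * δ) • ⇑(m u)) q μ :=
        eLpNorm_mono_ae hptw
    _ = ‖(ρ⁻¹ * δ)‖₊ • eLpNorm (⇑(m u)) q μ := eLpNorm_const_smul _ _ _ _
    _ = ENNReal.ofReal (ρ⁻¹ * δ) * eLpNorm (⇑(m u)) q μ := by
        rw [ENNReal.smul_def, smul_eq_mul, ← enorm_eq_nnnorm, Real.enorm_eq_ofReal (by positivity)]
end

section
/- Suppose Assumption (D) holds. Then the maximal solution map M of the fixed-point problem (F) is concave in the pointwise a.e. order sense: for all u₁, u₂ ∈ U and all λ ∈ [0, 1], it holds λ M(u₁) + (1 − λ) M(u₂) ≤ M(λ u₁ + (1 − λ) u₂) μ-a.e. in X. -/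
open MeasureTheory Filter Topology ENNReal

/-- Proposition 4.2 of the paper: pointwise concavity of the maximal
solution map `M` of the fixed-point problem (F) under Assumption (D). -/
theorem stmt_5
    {X : Type*} [MeasurableSpace X] {μ : Measure X} [μ.IsComplete]
    {V : Type*} [AddCommGroup V] [PartialOrder V] [Module ℝ V]
    {W : Type*} [AddCommGroup W] [Module ℝ W]
    (P : Set V) (hP_convex : Convex ℝ P)
    (U : Set W) (hU_convex : Convex ℝ U)
    (S : V → W → Lp ℝ 2 μ)
    (hS_nonneg : ∀ p : V, ∀ u ∈ U, 0 ≤ S p u)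
    (hS_mono_p : ∀ u ∈ U, ∀ p₁ p₂ : V, p₁ ≤ p₂ → S p₁ u ≤ S p₂ u)
    (hS_concave : ∀ p₁ ∈ P, ∀ p₂ ∈ P, ∀ u₁ ∈ U, ∀ u₂ ∈ U,
      ∀ lam ∈ Set.Icc (0 : ℝ) 1,
      lam • S p₁ u₁ + (1 - lam) • S p₂ u₂ ≤
        S (lam • p₁ + (1 - lam) • p₂) (lam • u₁ + (1 - lam) • u₂))
    (Φ : Lp ℝ 2 μ → V)
    (hΦ_mem : ∀ v, Φ v ∈ P)
    (hΦ_mono : ∀ v₁ v₂ : Lp ℝ 2 μ, v₁ ≤ v₂ → Φ v₁ ≤ Φ v₂)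
    (hΦ_concave : ∀ v₁ v₂ : Lp ℝ 2 μ, 0 ≤ v₁ → 0 ≤ v₂ →
      ∀ lam ∈ Set.Icc (0 : ℝ) 1,
      lam • Φ v₁ + (1 - lam) • Φ v₂ ≤ Φ (lam • v₁ + (1 - lam) • v₂))
    (M : W → Lp ℝ 2 μ)
    (hM_sol : ∀ u ∈ U, M u = S (Φ (M u)) u)
    (hM_max : ∀ u ∈ U, ∀ v : Lp ℝ 2 μ, v ≤ S (Φ v) u → v ≤ M u) :
    ∀ u₁ ∈ U, ∀ u₂ ∈ U, ∀ lam ∈ Set.Icc (0 : ℝ) 1,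
      lam • M u₁ + (1 - lam) • M u₂ ≤ M (lam • u₁ + (1 - lam) • u₂) := by
  intro u₁ hu₁ u₂ hu₂ lam hlam
  obtain ⟨h0, h1⟩ := hlam
  have hu : lam • u₁ + (1 - lam) • u₂ ∈ U :=
    hU_convex hu₁ hu₂ h0 (by linarith) (by ring)
  apply hM_max _ hu
  have hM1 : 0 ≤ M u₁ := by rw [hM_sol u₁ hu₁]; exact hS_nonneg _ _ hu₁
  have hM2 : 0 ≤ M u₂ := by rw [hM_sol u₂ hu₂]; exact hS_nonneg _ _ hu₂
  calc lam • M u₁ + (1 - lam) • M u₂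
      = lam • S (Φ (M u₁)) u₁ + (1 - lam) • S (Φ (M u₂)) u₂ := by
        rw [← hM_sol u₁ hu₁, ← hM_sol u₂ hu₂]
    _ ≤ S (lam • Φ (M u₁) + (1 - lam) • Φ (M u₂)) (lam • u₁ + (1 - lam) • u₂) :=
        hS_concave _ (hΦ_mem _) _ (hΦ_mem _) _ hu₁ _ hu₂ _ ⟨h0, h1⟩
    _ ≤ S (Φ (lam • M u₁ + (1 - lam) • M u₂)) (lam • u₁ + (1 - lam) • u₂) :=
        hS_mono_p _ hu _ _ (hΦ_concave _ _ hM1 hM2 _ ⟨h0, h1⟩)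
end

section
/- Suppose Assumption (D) holds, let u ∈ U, and let h be an element of the cone ℝ⁺(U − u) such that u + τh ∈ U for all τ ∈ (0, τ₀) with some τ₀ > 0. Define δ_τ := (M(u + τh) − M(u))/τ for τ ∈ (0, τ₀). Then there exists a unique μ-measurable function δ : X → (−∞, ∞] (i.e., an element of L⁰(X, (−∞, ∞])) such that for every sequence {τ_n} ⊂ (0, τ₀) with τ_n → 0 it holds δ_{τ_n} → δ pointwise μ-a.e. in X. -/
open MeasureTheory Filter Topology ENNReal

private lemma lp_smul_mono' {X : Type*} [MeasurableSpace X] {μ : Measure X}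
    {c : ℝ} (hc : 0 ≤ c) {f g : Lp ℝ 2 μ} (hfg : f ≤ g) : c • f ≤ c • g := by
  rw [← Lp.coeFn_le]
  filter_upwards [Lp.coeFn_smul c f, Lp.coeFn_smul c g, (Lp.coeFn_le f g).mpr hfg]
    with x h1 h2 h3
  rw [h1, h2]
  simpa using mul_le_mul_of_nonneg_left h3 hc

private noncomputable def qaux {X : Type*} [MeasurableSpace X] {μ : Measure X}
    {W : Type*} [AddCommGroup W] [Module ℝ W]
    (M : W → Lp ℝ 2 μ) (u h : W) (τ : ℝ) : Lp ℝ 2 μ :=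
  τ⁻¹ • (M (u + τ • h) - M u)

/-- Theorem 4.3 of the paper: pointwise directional differentiability
of the maximal solution map `M` of the fixed-point problem (F) under Assumption (D):
there exists a unique element `δ` of `L⁰(X, (−∞, ∞])` (modeled as an a.e. class of
measurable `EReal`-valued functions avoiding `⊥`) to which the difference quotients
converge pointwise μ-a.e. along every vanishing sequence of step sizes. -/
theorem stmt_7
    {X : Type*} [MeasurableSpace X] {μ : Measure X} [μ.IsComplete]
    {V : Type*} [AddCommGroup V] [PartialOrder V] [Module ℝ V]
    {W : Type*} [AddCommGroup W] [Module ℝ W]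
    (P : Set V) (hP_convex : Convex ℝ P)
    (U : Set W) (hU_convex : Convex ℝ U)
    (S : V → W → Lp ℝ 2 μ)
    (hS_nonneg : ∀ p : V, ∀ u ∈ U, 0 ≤ S p u)
    (hS_mono_p : ∀ u ∈ U, ∀ p₁ p₂ : V, p₁ ≤ p₂ → S p₁ u ≤ S p₂ u)
    (hS_concave : ∀ p₁ ∈ P, ∀ p₂ ∈ P, ∀ u₁ ∈ U, ∀ u₂ ∈ U,
      ∀ lam ∈ Set.Icc (0 : ℝ) 1,
      lam • S p₁ u₁ + (1 - lam) • S p₂ u₂ ≤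
        S (lam • p₁ + (1 - lam) • p₂) (lam • u₁ + (1 - lam) • u₂))
    (Φ : Lp ℝ 2 μ → V)
    (hΦ_mem : ∀ v, Φ v ∈ P)
    (hΦ_mono : ∀ v₁ v₂ : Lp ℝ 2 μ, v₁ ≤ v₂ → Φ v₁ ≤ Φ v₂)
    (hΦ_concave : ∀ v₁ v₂ : Lp ℝ 2 μ, 0 ≤ v₁ → 0 ≤ v₂ →
      ∀ lam ∈ Set.Icc (0 : ℝ) 1,
      lam • Φ v₁ + (1 - lam) • Φ v₂ ≤ Φ (lam • v₁ + (1 - lam) • v₂))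
    (M : W → Lp ℝ 2 μ)
    (hM_sol : ∀ u ∈ U, M u = S (Φ (M u)) u)
    (hM_max : ∀ u ∈ U, ∀ v : Lp ℝ 2 μ, v ≤ S (Φ v) u → v ≤ M u)
    (u : W) (hu : u ∈ U) (h : W)
    (hcone : ∃ lam : ℝ, 0 ≤ lam ∧ ∃ w ∈ U, h = lam • (w - u))
    (τ₀ : ℝ) (hτ₀ : 0 < τ₀)
    (hmem : ∀ τ : ℝ, τ ∈ Set.Ioo (0 : ℝ) τ₀ → u + τ • h ∈ U) :
    ∃ δ : X → EReal, Measurable δ ∧ (∀ᵐ x ∂μ, δ x ≠ ⊥) ∧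
      (∀ τn : ℕ → ℝ, (∀ n, τn n ∈ Set.Ioo (0 : ℝ) τ₀) →
        Tendsto τn atTop (𝓝 0) →
        ∀ᵐ x ∂μ, Tendsto
          (fun n => ((((τn n)⁻¹ • (M (u + (τn n) • h) - M u) : Lp ℝ 2 μ) x : ℝ) : EReal))
          atTop (𝓝 (δ x))) ∧
      (∀ δ' : X → EReal, Measurable δ' → (∀ᵐ x ∂μ, δ' x ≠ ⊥) →
        (∀ τn : ℕ → ℝ, (∀ n, τn n ∈ Set.Ioo (0 : ℝ) τ₀) →
          Tendsto τn atTop (𝓝 0) →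
          ∀ᵐ x ∂μ, Tendsto
            (fun n => ((((τn n)⁻¹ • (M (u + (τn n) • h) - M u) : Lp ℝ 2 μ) x : ℝ) : EReal))
            atTop (𝓝 (δ' x))) →
        δ' =ᵐ[μ] δ) := by
  -- nonnegativity of M on U
  have hM_nonneg : ∀ w ∈ U, 0 ≤ M w := by
    intro w hw
    rw [hM_sol w hw]
    exact hS_nonneg _ w hw
  -- concavity of M on U
  have hM_concave : ∀ u₁ ∈ U, ∀ u₂ ∈ U, ∀ lam ∈ Set.Icc (0:ℝ) 1,
      lam • M u₁ + (1 - lam) • M u₂ ≤ M (lam • u₁ + (1 - lam) • u₂) := by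
    intro u₁ h₁ u₂ h₂ lam hlam
    have hmemU : lam • u₁ + (1 - lam) • u₂ ∈ U :=
      hU_convex h₁ h₂ hlam.1 (by linarith [hlam.2]) (by ring)
    apply hM_max _ hmemU
    calc lam • M u₁ + (1 - lam) • M u₂
        = lam • S (Φ (M u₁)) u₁ + (1 - lam) • S (Φ (M u₂)) u₂ := by
          rw [← hM_sol u₁ h₁, ← hM_sol u₂ h₂]
      _ ≤ S (lam • Φ (M u₁) + (1 - lam) • Φ (M u₂)) (lam • u₁ + (1 - lam) • u₂) :=
          hS_concave _ (hΦ_mem _) _ (hΦ_mem _) _ h₁ _ h₂ lam hlam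
      _ ≤ S (Φ (lam • M u₁ + (1 - lam) • M u₂)) (lam • u₁ + (1 - lam) • u₂) :=
          hS_mono_p _ hmemU _ _
            (hΦ_concave _ _ (hM_nonneg u₁ h₁) (hM_nonneg u₂ h₂) lam hlam)
  -- monotonicity of difference quotients
  have hq_mono : ∀ σ τ : ℝ, 0 < σ → σ ≤ τ → τ < τ₀ →
      qaux M u h τ ≤ qaux M u h σ := by
    intro σ τ hσ hστ hτ
    have hτpos : 0 < τ := lt_of_lt_of_le hσ hστ
    set lam := σ / τ with hlamdef
    have hlam : lam ∈ Set.Icc (0:ℝ) 1 :=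
      ⟨div_nonneg hσ.le hτpos.le, (div_le_one hτpos).mpr hστ⟩
    have huτ : u + τ • h ∈ U := hmem τ ⟨hτpos, hτ⟩
    have hlt : lam * τ = σ := div_mul_cancel₀ σ hτpos.ne'
    have hcomb : lam • (u + τ • h) + (1 - lam) • u = u + σ • h := by
      have : lam • (u + τ • h) + (1 - lam) • u = u + (lam * τ) • h := by
        rw [mul_smul]; module
      rw [this, hlt]
    have hc := hM_concave (u + τ • h) huτ u hu lam hlam
    rw [hcomb] at hc
    have h2 : lam • (M (u + τ • h) - M u) ≤ M (u + σ • h) - M u := by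
      have h2' := sub_le_sub_right hc (M u)
      calc lam • (M (u + τ • h) - M u)
          = lam • M (u + τ • h) + (1 - lam) • M u - M u := by module
        _ ≤ _ := h2'
    have h3 := lp_smul_mono' (inv_nonneg.mpr hσ.le) h2
    have h4 : σ⁻¹ • (lam • (M (u + τ • h) - M u)) = τ⁻¹ • (M (u + τ • h) - M u) := by
      rw [smul_smul]
      congr 1
      rw [hlamdef]
      field_simp
    show τ⁻¹ • (M (u + τ • h) - M u) ≤ σ⁻¹ • (M (u + σ • h) - M u)
    rw [← h4]
    exact h3
  -- the master sequence
  set σ : ℕ → ℝ := fun k => τ₀ / ((k : ℝ) + 2) with hσdef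
  have hσIoo : ∀ k, σ k ∈ Set.Ioo (0:ℝ) τ₀ := by
    intro k
    constructor
    · exact div_pos hτ₀ (by positivity)
    · apply div_lt_self hτ₀
      have : (0:ℝ) ≤ (k:ℝ) := Nat.cast_nonneg k
      linarith
  have hσ0 : Tendsto σ atTop (𝓝 0) := by
    apply Tendsto.const_div_atTop
    exact tendsto_atTop_add_const_right _ 2 tendsto_natCast_atTop_atTop
  -- the candidate limit
  set δ : X → EReal := fun x => ⨆ k, ((((qaux M u h (σ k)) : X → ℝ) x : ℝ) : EReal)
    with hδdef
  have hδmeas : Measurable δ := by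
    apply Measurable.iSup
    intro k
    exact measurable_coe_real_ereal.comp (Lp.stronglyMeasurable _).measurable
  have hδbot : ∀ x, δ x ≠ ⊥ := by
    intro x
    have h1 : ((((qaux M u h (σ 0)) : X → ℝ) x : ℝ) : EReal) ≤ δ x :=
      le_iSup (fun k => ((((qaux M u h (σ k)) : X → ℝ) x : ℝ) : EReal)) 0
    exact ((EReal.bot_lt_coe _).trans_le h1).ne'
  -- the key convergence statement
  have key : ∀ τn : ℕ → ℝ, (∀ n, τn n ∈ Set.Ioo (0:ℝ) τ₀) →
      Tendsto τn atTop (𝓝 0) →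
      ∀ᵐ x ∂μ, Tendsto
        (fun n => ((((qaux M u h (τn n)) : X → ℝ) x : ℝ) : EReal))
        atTop (𝓝 (δ x)) := by
    intro τn hIoo htn
    have H1 : ∀ᵐ x ∂μ, ∀ n k, σ k ≤ τn n →
        ((qaux M u h (τn n)) : X → ℝ) x ≤ ((qaux M u h (σ k)) : X → ℝ) x := by
      rw [ae_all_iff]
      intro n
      rw [ae_all_iff]
      intro k
      by_cases hle : σ k ≤ τn n
      · filter_upwards [(Lp.coeFn_le _ _).mpr
          (hq_mono (σ k) (τn n) (hσIoo k).1 hle (hIoo n).2)] with x hx _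
        exact hx
      · exact ae_of_all _ fun x hx => absurd hx hle
    have H2 : ∀ᵐ x ∂μ, ∀ n k, τn n ≤ σ k →
        ((qaux M u h (σ k)) : X → ℝ) x ≤ ((qaux M u h (τn n)) : X → ℝ) x := by
      rw [ae_all_iff]
      intro n
      rw [ae_all_iff]
      intro k
      by_cases hle : τn n ≤ σ k
      · filter_upwards [(Lp.coeFn_le _ _).mpr
          (hq_mono (τn n) (σ k) (hIoo n).1 hle (hσIoo k).2)] with x hx _
        exact hx
      · exact ae_of_all _ fun x hx => absurd hx hle
    filter_upwards [H1, H2] with x hx1 hx2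
    have hup : limsup (fun n => ((((qaux M u h (τn n)) : X → ℝ) x : ℝ) : EReal))
        atTop ≤ δ x := by
      apply limsup_le_of_le (by isBoundedDefault)
      apply Eventually.of_forall
      intro n
      obtain ⟨k, hk⟩ : ∃ k, σ k < τn n := (hσ0.eventually_lt_const (hIoo n).1).exists
      exact le_trans (EReal.coe_le_coe_iff.mpr (hx1 n k hk.le))
        (le_iSup (fun k => ((((qaux M u h (σ k)) : X → ℝ) x : ℝ) : EReal)) k)
    have hlo : δ x ≤ liminf
        (fun n => ((((qaux M u h (τn n)) : X → ℝ) x : ℝ) : EReal)) atTop := by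
      apply iSup_le
      intro k
      apply le_liminf_of_le (by isBoundedDefault)
      have hev : ∀ᶠ n in atTop, τn n < σ k := htn.eventually_lt_const (hσIoo k).1
      exact hev.mono fun n hn => EReal.coe_le_coe_iff.mpr (hx2 n k hn.le)
    have hls : limsup (fun n => ((((qaux M u h (τn n)) : X → ℝ) x : ℝ) : EReal))
        atTop = δ x := le_antisymm hup (le_trans hlo liminf_le_limsup)
    have hli : liminf (fun n => ((((qaux M u h (τn n)) : X → ℝ) x : ℝ) : EReal))
        atTop = δ x := le_antisymm (le_trans liminf_le_limsup hup) hlo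
    exact tendsto_of_liminf_eq_limsup hli hls
  refine ⟨δ, hδmeas, ae_of_all _ hδbot, key, ?_⟩
  intro δ' hmeas' hbot' hconv'
  have h1 := hconv' σ (fun k => hσIoo k) hσ0
  have h2 := key σ (fun k => hσIoo k) hσ0
  filter_upwards [h1, h2] with x hx1 hx2
  exact tendsto_nhds_unique hx1 hx2
end

section
/- Suppose Assumptions (L) and (D) both hold and let 1 ≤ r ≤ 2 ≤ s ≤ ∞ be numbers such that S(p, u) ∈ L^{[r,s]}(X) for all p ∈ P and u ∈ U. Then for every u ∈ U ∩ L^∞_⊕(Y) and every h ∈ ℝ⁺(U − u), there exists a unique M'(u; h) ∈ L^{[r,s]}(X) such that for all sequences {τ_n} ⊂ (0, ∞) and {h_n} ⊂ ℝ⁺(U − u) with τ_n → 0, ‖h − h_n‖_{L^∞(Y)} → 0, and u + τ_n h_n ∈ U for all n, the difference quotients (M(u + τ_n h_n) − M(u))/τ_n converge to M'(u; h) in L^q(X) for every q ∈ [r, s] \ {∞}. -/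
set_option maxHeartbeats 2000000

open MeasureTheory Filter Topology ENNReal

private lemma aux_lintegral_lt_top {α : Type*} [MeasurableSpace α] {μ : Measure α}
    {f : α → ℝ} {p : ℝ≥0∞} (hp0 : p ≠ 0) (hpt : p ≠ ⊤) (hf : MemLp f p μ) :
    ∫⁻ x, (‖f x‖₊ : ℝ≥0∞) ^ p.toReal ∂μ < ⊤ :=
  lintegral_rpow_enorm_lt_top_of_eLpNorm_lt_top hp0 hpt hf.2

private lemma memLp_interpolate {α : Type*} [MeasurableSpace α] {μ : Measure α}
    {f : α → ℝ} {r s q : ℝ≥0∞} (hr0 : r ≠ 0) (hrq : r ≤ q) (hqs : q ≤ s) (hqt : q ≠ ⊤)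
    (hfr : MemLp f r μ) (hfs : MemLp f s μ) : MemLp f q μ := by
  have hq0 : q ≠ 0 := fun hq => hr0 (le_antisymm (hq ▸ hrq) (zero_le : 0 ≤ r))
  have hrt : r ≠ ⊤ := fun hr => hqt (top_le_iff.mp (hr ▸ hrq))
  refine ⟨hfr.1, ?_⟩
  rw [eLpNorm_lt_top_iff_lintegral_rpow_enorm_lt_top hq0 hqt]
  have hrq' : r.toReal ≤ q.toReal := ENNReal.toReal_mono hqt hrq
  by_cases hst : s = ⊤
  · -- bounded case
    set B : ℝ≥0∞ := eLpNormEssSup f μ with hB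
    have hBlt : B < ⊤ := by
      have := hfs.2; rwa [hst, eLpNorm_exponent_top] at this
    have hae : ∀ᵐ x ∂μ, (‖f x‖₊ : ℝ≥0∞) ≤ B := ae_le_eLpNormEssSup
    have hle : ∫⁻ x, (‖f x‖₊ : ℝ≥0∞) ^ q.toReal ∂μ ≤
        ∫⁻ x, B ^ (q.toReal - r.toReal) * (‖f x‖₊ : ℝ≥0∞) ^ r.toReal ∂μ := by
      refine lintegral_mono_ae (hae.mono fun x hx => ?_)
      rcases eq_or_ne (‖f x‖₊ : ℝ≥0∞) 0 with h0 | h0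
      · rw [h0, ENNReal.zero_rpow_of_pos (ENNReal.toReal_pos hq0 hqt)]
        exact zero_le
      · have : (‖f x‖₊ : ℝ≥0∞) ^ q.toReal =
            (‖f x‖₊ : ℝ≥0∞) ^ (q.toReal - r.toReal) * (‖f x‖₊ : ℝ≥0∞) ^ r.toReal := by
          rw [← ENNReal.rpow_add _ _ h0 coe_ne_top, sub_add_cancel]
        rw [this]
        exact mul_le_mul_left (ENNReal.rpow_le_rpow hx (by linarith)) _
    refine hle.trans_lt ?_
    rw [lintegral_const_mul' _ _ (ENNReal.rpow_ne_top_of_nonneg (by linarith) hBlt.ne)]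
    exact ENNReal.mul_lt_top (ENNReal.rpow_lt_top_of_nonneg (by linarith) hBlt.ne)
      (aux_lintegral_lt_top hr0 hrt hfr)
  · have hqs' : q.toReal ≤ s.toReal := ENNReal.toReal_mono hst hqs
    have hle : ∫⁻ x, (‖f x‖₊ : ℝ≥0∞) ^ q.toReal ∂μ ≤
        ∫⁻ x, ((‖f x‖₊ : ℝ≥0∞) ^ r.toReal + (‖f x‖₊ : ℝ≥0∞) ^ s.toReal) ∂μ := by
      refine lintegral_mono fun x => ?_
      rcases le_total ((‖f x‖₊ : ℝ≥0∞)) 1 with h1 | h1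
      · exact le_add_right (ENNReal.rpow_le_rpow_of_exponent_ge h1 hrq')
      · exact le_add_left (ENNReal.rpow_le_rpow_of_exponent_le h1 hqs')
    refine hle.trans_lt ?_
    rw [lintegral_add_left' (f := fun x => (‖f x‖₊ : ℝ≥0∞) ^ r.toReal)
      (hfr.1.enorm.pow_const r.toReal)]
    exact ENNReal.add_lt_top.mpr ⟨aux_lintegral_lt_top hr0 hrt hfr,
      aux_lintegral_lt_top (fun h => hq0 (le_antisymm (h ▸ hqs) (zero_le : 0 ≤ q))) hst hfs⟩

private lemma tendsto_eLpNorm_zero_of_dominated {α : Type*} [MeasurableSpace α] {μ : Measure α}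
    {F : ℕ → α → ℝ} {G : α → ℝ} {q : ℝ≥0∞} (hq0 : q ≠ 0) (hqt : q ≠ ⊤)
    (hFm : ∀ n, AEStronglyMeasurable (F n) μ)
    (hG : MemLp G q μ)
    (hbound : ∀ n, ∀ᵐ x ∂μ, ‖F n x‖ ≤ G x)
    (hlim : ∀ᵐ x ∂μ, Tendsto (fun n => F n x) atTop (𝓝 0)) :
    Tendsto (fun n => eLpNorm (F n) q μ) atTop (𝓝 0) := by
  have hqT : 0 < q.toReal := ENNReal.toReal_pos hq0 hqt
  have key : Tendsto (fun n => ∫⁻ x, (‖F n x‖₊ : ℝ≥0∞) ^ q.toReal ∂μ) atTop (𝓝 0) := by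
    have := tendsto_lintegral_of_dominated_convergence'
      (μ := μ) (F := fun n x => (‖F n x‖₊ : ℝ≥0∞) ^ q.toReal)
      (f := fun _ => (0 : ℝ≥0∞))
      (fun x => (‖G x‖₊ : ℝ≥0∞) ^ q.toReal)
      (fun n => (hFm n).enorm.pow_const q.toReal)
      (fun n => (hbound n).mono fun x hx => by
        refine ENNReal.rpow_le_rpow ?_ hqT.le
        have hn : ‖F n x‖₊ ≤ ‖G x‖₊ := by
          rw [← NNReal.coe_le_coe]
          simpa [coe_nnnorm, Real.norm_eq_abs] using hx.trans (le_abs_self _)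
        exact ENNReal.coe_le_coe.2 hn)
      (by
        simpa using (aux_lintegral_lt_top hq0 hqt hG).ne)
      (hlim.mono fun x hx => by
        have h1 : Tendsto (fun n => (‖F n x‖₊ : ℝ≥0∞)) atTop (𝓝 0) := by
          rw [← ENNReal.coe_zero]
          exact ENNReal.tendsto_coe.2 (by simpa using hx.nnnorm)
        have h2 := (ENNReal.continuous_rpow_const (y := q.toReal)).tendsto 0 |>.comp h1
        simpa [ENNReal.zero_rpow_of_pos hqT, Function.comp_def] using h2)
    simpa using this
  have heq : (fun n => eLpNorm (F n) q μ)
      = fun n => (∫⁻ x, (‖F n x‖₊ : ℝ≥0∞) ^ q.toReal ∂μ) ^ (1 / q.toReal) :=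
    funext fun n => eLpNorm_eq_lintegral_rpow_enorm_toReal hq0 hqt
  rw [heq]
  have h0 : ((0:ℝ≥0∞) ^ (1 / q.toReal)) = 0 :=
    ENNReal.zero_rpow_of_pos (by positivity)
  rw [← h0]
  exact (ENNReal.continuous_rpow_const (y := 1 / q.toReal)).tendsto 0 |>.comp key


open MeasureTheory Filter Topology ENNReal

/-- Corollary 4.4 of the paper: Hadamard directional differentiability
of the maximal solution map `M` of the fixed-point problem (F) on `U ∩ L^∞_⊕(Y)` under
Assumptions (L) and (D), with convergence of the difference quotients in `L^q(X)` for
all `q ∈ [r, s] \ {∞}`. -/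
theorem stmt_8
    {X : Type*} [MeasurableSpace X] {μ : Measure X} [μ.IsComplete]
    {Y : Type*} [MeasurableSpace Y] {η : Measure Y} [η.IsComplete]
    {V : Type*} [AddCommGroup V] [PartialOrder V] [Module ℝ V]
    (P : Set V) (hP_convex : Convex ℝ P)
    (hP_scale : ∀ p ∈ P, ∀ lam : ℝ, lam ∈ Set.Ioc (0 : ℝ) 1 → lam • p ∈ P)
    (U : Set (Lp ℝ ⊤ η)) (hU_convex : Convex ℝ U)
    (hU_nonneg : ∀ u ∈ U, 0 ≤ u)
    (hU_scale : ∀ u ∈ U, ∀ lam : ℝ, lam ∈ Set.Ioc (0 : ℝ) 1 → lam • u ∈ U)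
    (S : V → Lp ℝ ⊤ η → Lp ℝ 2 μ)
    (hS_nonneg : ∀ p : V, ∀ u ∈ U, 0 ≤ S p u)
    (hS_mono_p : ∀ u ∈ U, ∀ p₁ p₂ : V, p₁ ≤ p₂ → S p₁ u ≤ S p₂ u)
    (hS_mono_u : ∀ p ∈ P, ∀ u₁ ∈ U, ∀ u₂ ∈ U, u₁ ≤ u₂ → S p u₁ ≤ S p u₂)
    (hS_superhom : ∀ p ∈ P, ∀ u ∈ U, ∀ lam : ℝ, lam ∈ Set.Ioc (0 : ℝ) 1 →
      lam • S p u ≤ S (lam • p) (lam • u))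
    (hS_concave : ∀ p₁ ∈ P, ∀ p₂ ∈ P, ∀ u₁ ∈ U, ∀ u₂ ∈ U,
      ∀ lam ∈ Set.Icc (0 : ℝ) 1,
      lam • S p₁ u₁ + (1 - lam) • S p₂ u₂ ≤
        S (lam • p₁ + (1 - lam) • p₂) (lam • u₁ + (1 - lam) • u₂))
    (Φ : Lp ℝ 2 μ → V)
    (hΦ_mem : ∀ v, Φ v ∈ P)
    (hΦ_mono : ∀ v₁ v₂ : Lp ℝ 2 μ, v₁ ≤ v₂ → Φ v₁ ≤ Φ v₂)
    (hΦ_superhom : ∀ v : Lp ℝ 2 μ, 0 ≤ v → ∀ lam : ℝ, lam ∈ Set.Ioc (0 : ℝ) 1 →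
      lam • Φ v ≤ Φ (lam • v))
    (hΦ_concave : ∀ v₁ v₂ : Lp ℝ 2 μ, 0 ≤ v₁ → 0 ≤ v₂ →
      ∀ lam ∈ Set.Icc (0 : ℝ) 1,
      lam • Φ v₁ + (1 - lam) • Φ v₂ ≤ Φ (lam • v₁ + (1 - lam) • v₂))
    (r s : ℝ≥0∞) (hr1 : 1 ≤ r) (hr2 : r ≤ 2) (hs2 : 2 ≤ s)
    (hSrs : ∀ p ∈ P, ∀ u ∈ U, MemLp (⇑(S p u)) r μ ∧ MemLp (⇑(S p u)) s μ)
    (M : Lp ℝ ⊤ η → Lp ℝ 2 μ)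
    (hM_sol : ∀ u ∈ U, M u = S (Φ (M u)) u)
    (hM_max : ∀ u ∈ U, ∀ v : Lp ℝ 2 μ, v ≤ S (Φ v) u → v ≤ M u)
    (u : Lp ℝ ⊤ η) (hu : u ∈ U)
    (c : ℝ) (hc : 0 < c) (huc : ∀ᵐ y ∂η, c ≤ u y)
    (h : Lp ℝ ⊤ η)
    (hcone : ∃ lam : ℝ, 0 ≤ lam ∧ ∃ w ∈ U, h = lam • (w - u)) :
    ∃! Md : Lp ℝ 2 μ, MemLp (⇑Md) r μ ∧ MemLp (⇑Md) s μ ∧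
      ∀ (τn : ℕ → ℝ) (hn : ℕ → Lp ℝ ⊤ η),
        (∀ n, 0 < τn n) → Tendsto τn atTop (𝓝 0) →
        (∀ n, ∃ lam : ℝ, 0 ≤ lam ∧ ∃ w ∈ U, hn n = lam • (w - u)) →
        Tendsto (fun n => ‖h - hn n‖) atTop (𝓝 0) →
        (∀ n, u + τn n • hn n ∈ U) →
        ∀ q : ℝ≥0∞, r ≤ q → q ≤ s → q ≠ ⊤ →
          Tendsto
            (fun n => eLpNorm (⇑((τn n)⁻¹ • (M (u + τn n • hn n) - M u) - Md)) q μ)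
            atTop (𝓝 0) := by
  classical
  obtain ⟨lam₀, hlam₀, w₀, hw₀, hh⟩ := hcone
  -- pointwise bound for L∞ functions
  have hbd : ∀ f : Lp ℝ ⊤ η, ∀ᵐ y ∂η, |f y| ≤ ‖f‖ := by
    intro f
    have h2 : eLpNorm (⇑f) ⊤ η ≠ ⊤ := Lp.eLpNorm_ne_top f
    rw [eLpNorm_exponent_top] at h2
    filter_upwards [ae_le_eLpNormEssSup (f := ⇑f) (μ := η)] with y h1
    have h3 : ((‖f y‖₊ : ℝ≥0∞)).toReal ≤ (eLpNormEssSup (⇑f) η).toReal :=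
      ENNReal.toReal_mono h2 h1
    simpa [Lp.norm_def, eLpNorm_exponent_top, Real.norm_eq_abs] using h3
  -- basic properties of M
  have hMnn : ∀ u' ∈ U, (0 : Lp ℝ 2 μ) ≤ M u' := by
    intro u' hu'
    rw [hM_sol u' hu']
    exact hS_nonneg _ _ hu'
  have hMmono : ∀ u₁ ∈ U, ∀ u₂ ∈ U, u₁ ≤ u₂ → M u₁ ≤ M u₂ := by
    intro u₁ h₁ u₂ h₂ h12
    refine hM_max u₂ h₂ (M u₁) ?_
    calc M u₁ = S (Φ (M u₁)) u₁ := hM_sol u₁ h₁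
      _ ≤ S (Φ (M u₁)) u₂ := hS_mono_u _ (hΦ_mem _) u₁ h₁ u₂ h₂ h12
  have hMsuper : ∀ u' ∈ U, ∀ lam : ℝ, lam ∈ Set.Ioc (0:ℝ) 1 →
      lam • M u' ≤ M (lam • u') := by
    intro u' hu' lam hlam
    refine hM_max (lam • u') (hU_scale u' hu' lam hlam) _ ?_
    calc lam • M u' = lam • S (Φ (M u')) u' := by rw [← hM_sol u' hu']
      _ ≤ S (lam • Φ (M u')) (lam • u') := hS_superhom _ (hΦ_mem _) u' hu' lam hlam
      _ ≤ S (Φ (lam • M u')) (lam • u') :=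
          hS_mono_p (lam • u') (hU_scale u' hu' lam hlam) _ _
            (hΦ_superhom (M u') (hMnn u' hu') lam hlam)
  have hMconc : ∀ u₁ ∈ U, ∀ u₂ ∈ U, ∀ lam ∈ Set.Icc (0:ℝ) 1,
      lam • M u₁ + (1 - lam) • M u₂ ≤ M (lam • u₁ + (1 - lam) • u₂) := by
    intro u₁ h₁ u₂ h₂ lam hlam
    have hmem : lam • u₁ + (1 - lam) • u₂ ∈ U :=
      hU_convex h₁ h₂ hlam.1 (by linarith [hlam.2]) (by ring)
    refine hM_max _ hmem _ ?_
    calc lam • M u₁ + (1 - lam) • M u₂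
        = lam • S (Φ (M u₁)) u₁ + (1 - lam) • S (Φ (M u₂)) u₂ := by
          rw [← hM_sol u₁ h₁, ← hM_sol u₂ h₂]
      _ ≤ S (lam • Φ (M u₁) + (1 - lam) • Φ (M u₂)) (lam • u₁ + (1 - lam) • u₂) :=
          hS_concave _ (hΦ_mem _) _ (hΦ_mem _) _ h₁ _ h₂ lam hlam
      _ ≤ S (Φ (lam • M u₁ + (1 - lam) • M u₂)) (lam • u₁ + (1 - lam) • u₂) :=
          hS_mono_p _ hmem _ _ (hΦ_concave _ _ (hMnn u₁ h₁) (hMnn u₂ h₂) lam hlam)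
  have key : ∀ u₁ ∈ U, ∀ u₂ ∈ U, ∀ δ : ℝ, 0 ≤ δ → δ < 1 →
      ((1 - δ) • u₂ : Lp ℝ ⊤ η) ≤ u₁ → (1 - δ) • M u₂ ≤ M u₁ := by
    intro u₁ h₁ u₂ h₂ δ hδ0 hδ1 hle
    have hmem : (1 - δ) ∈ Set.Ioc (0:ℝ) 1 := ⟨by linarith, by linarith⟩
    exact (hMsuper u₂ h₂ (1 - δ) hmem).trans
      (hMmono _ (hU_scale u₂ h₂ (1 - δ) hmem) u₁ h₁ hle)
  -- pointwise facts about g := M u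
  have hgr : MemLp (⇑(M u)) r μ := by
    rw [hM_sol u hu]; exact (hSrs _ (hΦ_mem _) u hu).1
  have hgs : MemLp (⇑(M u)) s μ := by
    rw [hM_sol u hu]; exact (hSrs _ (hΦ_mem _) u hu).2
  have hg0' : ∀ᵐ x ∂μ, 0 ≤ (M u) x :=
    ((Lp.coeFn_nonneg (M u)).2 (hMnn u hu)).mono fun x hx => hx
  -- central pointwise estimate
  have E1 : ∀ τ : ℝ, 0 < τ → ∀ k : Lp ℝ ⊤ η, u + τ • k ∈ U → τ * ‖k‖ ≤ c / 8 →
      ∀ᵐ x ∂μ, |(M (u + τ • k)) x - (M u) x| ≤ (8 * (τ * ‖k‖) / c) * (M u) x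
        ∧ (M (u + τ • k)) x ≤ 2 * (M u) x := by
    intro τ hτ k hkU hksmall
    set δ : ℝ := τ * ‖k‖ / c with hδdef
    have hδ0 : 0 ≤ δ := div_nonneg (mul_nonneg hτ.le (norm_nonneg k)) hc.le
    have hδ8 : δ ≤ 1 / 8 := by
      rw [hδdef, div_le_div_iff₀ hc (by norm_num)]
      linarith
    have hδc : δ * c = τ * ‖k‖ := by
      rw [hδdef]; field_simp
    have step1 : ((1 - δ) • u : Lp ℝ ⊤ η) ≤ u + τ • k := by
      rw [← Lp.coeFn_le]
      filter_upwards [Lp.coeFn_smul (1 - δ) u, Lp.coeFn_add u (τ • k),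
        Lp.coeFn_smul τ k, huc, hbd k] with y h1 h2 h3 h4 h5
      have hky : -‖k‖ ≤ k y := neg_le_of_abs_le h5
      have e1 : ((1 - δ) • u : Lp ℝ ⊤ η) y = (1 - δ) * u y := by
        rw [h1]; simp [Pi.smul_apply]
      have e2 : (u + τ • k : Lp ℝ ⊤ η) y = u y + τ * k y := by
        rw [h2, Pi.add_apply, h3]; simp [Pi.smul_apply]
      rw [e1, e2]
      nlinarith [mul_le_mul_of_nonneg_left h4 hδ0, mul_le_mul_of_nonneg_left hky hτ.le]
    have low : (1 - δ) • M u ≤ M (u + τ • k) := key _ hkU u hu δ hδ0 (by linarith) step1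
    have step2 : ((1 - 2 * δ) • (u + τ • k) : Lp ℝ ⊤ η) ≤ u := by
      rw [← Lp.coeFn_le]
      filter_upwards [Lp.coeFn_smul (1 - 2 * δ) (u + τ • k), Lp.coeFn_add u (τ • k),
        Lp.coeFn_smul τ k, huc, hbd k] with y h1 h2 h3 h4 h5
      have hky : k y ≤ ‖k‖ := le_of_abs_le h5
      have hky' : -‖k‖ ≤ k y := neg_le_of_abs_le h5
      have e2 : (u + τ • k : Lp ℝ ⊤ η) y = u y + τ * k y := by
        rw [h2, Pi.add_apply, h3]; simp [Pi.smul_apply]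
      have e1 : ((1 - 2 * δ) • (u + τ • k) : Lp ℝ ⊤ η) y = (1 - 2 * δ) * (u y + τ * k y) := by
        rw [h1, Pi.smul_apply, e2]; simp
      rw [e1]
      have hτk1 : τ * k y ≤ δ * c := by
        rw [hδc]; exact mul_le_mul_of_nonneg_left hky hτ.le
      have hτk2 : -(δ * c) ≤ τ * k y := by
        rw [hδc]
        have := mul_le_mul_of_nonneg_left hky' hτ.le
        linarith
      have hA : c - δ * c ≤ u y + τ * k y := by linarith
      have h10 : 2 * δ * (c - δ * c) ≤ 2 * δ * (u y + τ * k y) :=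
        mul_le_mul_of_nonneg_left hA (by linarith)
      have h11 : δ * (δ * c) ≤ (1/8) * (δ * c) :=
        mul_le_mul_of_nonneg_right hδ8 (mul_nonneg hδ0 hc.le)
      nlinarith [h10, h11, hτk1]
    have upRaw : (1 - 2 * δ) • M (u + τ • k) ≤ M u :=
      key u hu _ hkU (2 * δ) (by linarith) (by linarith) step2
    filter_upwards [(Lp.coeFn_le _ _).2 low, (Lp.coeFn_le _ _).2 upRaw,
      Lp.coeFn_smul (1 - δ) (M u), Lp.coeFn_smul (1 - 2 * δ) (M (u + τ • k)), hg0',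
      ((Lp.coeFn_nonneg (M (u + τ • k))).2 (hMnn _ hkU)).mono fun x hx => hx]
      with x hlow hup hsm1 hsm2 hgx hMx
    rw [hsm1] at hlow
    rw [hsm2] at hup
    simp only [Pi.smul_apply, smul_eq_mul] at hlow hup
    have h8 : 8 * (τ * ‖k‖) / c = 8 * δ := by rw [hδdef]; ring
    have h34 : (3/4 : ℝ) * (M (u + τ • k)) x ≤ (1 - 2 * δ) * (M (u + τ • k)) x :=
      mul_le_mul_of_nonneg_right (by linarith) hMx
    have hM2 : (M (u + τ • k)) x ≤ 2 * (M u) x := by linarith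
    refine ⟨?_, hM2⟩
    have h12 : 2 * δ * (M (u + τ • k)) x ≤ 2 * δ * (2 * (M u) x) :=
      mul_le_mul_of_nonneg_left hM2 (by linarith)
    have h13 : δ * (M u) x ≤ 8 * δ * (M u) x := by nlinarith [mul_nonneg hδ0 hgx]
    have h14 : 4 * δ * (M u) x ≤ 8 * δ * (M u) x := by nlinarith [mul_nonneg hδ0 hgx]
    rw [h8, abs_le]
    constructor
    · nlinarith [mul_le_mul_of_nonneg_right (show (1:ℝ) - δ ≤ 1 by linarith) hgx]
    · nlinarith
  -- comparison of two directions at the same step size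
  have E2 : ∀ τ : ℝ, 0 < τ → ∀ k₁ k₂ : Lp ℝ ⊤ η, u + τ • k₁ ∈ U → u + τ • k₂ ∈ U →
      τ * ‖k₁‖ ≤ c / 8 → τ * ‖k₂‖ ≤ c / 8 →
      ∀ᵐ x ∂μ, |(M (u + τ • k₁)) x - (M (u + τ • k₂)) x|
        ≤ (8 * (τ * ‖k₁ - k₂‖) / c) * (M u) x := by
    intro τ hτ
    have one : ∀ k₁ k₂ : Lp ℝ ⊤ η, u + τ • k₁ ∈ U → u + τ • k₂ ∈ U →
        τ * ‖k₁‖ ≤ c / 8 → τ * ‖k₂‖ ≤ c / 8 →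
        ∀ᵐ x ∂μ, (M (u + τ • k₂)) x - (M (u + τ • k₁)) x
          ≤ (8 * (τ * ‖k₁ - k₂‖) / c) * (M u) x := by
      intro k₁ k₂ hU1 hU2 hs1 hs2
      set e : ℝ := ‖k₁ - k₂‖ with he
      have he0 : 0 ≤ e := norm_nonneg _
      set δ : ℝ := 2 * (τ * e) / c with hδdef
      have hδ0 : 0 ≤ δ := by positivity
      have hτe : τ * e ≤ c / 4 := by
        have : e ≤ ‖k₁‖ + ‖k₂‖ := norm_sub_le _ _
        nlinarith [mul_le_mul_of_nonneg_left this hτ.le]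
      have hδ1 : δ ≤ 1 / 2 := by
        rw [hδdef, div_le_div_iff₀ hc (by norm_num)]
        linarith
      have hδc : δ * (c / 2) = τ * e := by rw [hδdef]; field_simp
      have step : ((1 - δ) • (u + τ • k₂) : Lp ℝ ⊤ η) ≤ u + τ • k₁ := by
        rw [← Lp.coeFn_le]
        filter_upwards [Lp.coeFn_smul (1 - δ) (u + τ • k₂), Lp.coeFn_add u (τ • k₂),
          Lp.coeFn_add u (τ • k₁), Lp.coeFn_smul τ k₁, Lp.coeFn_smul τ k₂,
          Lp.coeFn_sub k₁ k₂, huc, hbd (k₁ - k₂), hbd k₂] with y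
          h1 h2 h3 h4 h5 h6 h7 h8 h9
        have e2 : (u + τ • k₂ : Lp ℝ ⊤ η) y = u y + τ * k₂ y := by
          rw [h2, Pi.add_apply, h5]; simp [Pi.smul_apply]
        have e3 : (u + τ • k₁ : Lp ℝ ⊤ η) y = u y + τ * k₁ y := by
          rw [h3, Pi.add_apply, h4]; simp [Pi.smul_apply]
        have e1 : ((1 - δ) • (u + τ • k₂) : Lp ℝ ⊤ η) y = (1 - δ) * (u y + τ * k₂ y) := by
          rw [h1, Pi.smul_apply, e2]; simp
        rw [e1, e3]
        rw [h6, Pi.sub_apply] at h8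
        -- facts
        have f1 : k₂ y - k₁ y ≤ e := by
          have := neg_le_of_abs_le h8
          linarith
        have f2 : τ * (k₂ y - k₁ y) ≤ τ * e := mul_le_mul_of_nonneg_left f1 hτ.le
        have f3 : -‖k₂‖ ≤ k₂ y := neg_le_of_abs_le h9
        have f4 : τ * (-‖k₂‖) ≤ τ * k₂ y := mul_le_mul_of_nonneg_left f3 hτ.le
        have f5 : c / 2 ≤ u y + τ * k₂ y := by nlinarith
        have f6 : δ * (c / 2) ≤ δ * (u y + τ * k₂ y) := mul_le_mul_of_nonneg_left f5 hδ0
        rw [hδc] at f6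
        nlinarith
      have hkey := key _ hU1 _ hU2 δ hδ0 (by linarith) step
      have hE1 := E1 τ hτ k₂ hU2 hs2
      filter_upwards [(Lp.coeFn_le _ _).2 hkey, Lp.coeFn_smul (1 - δ) (M (u + τ • k₂)),
        hE1, hg0'] with x h1 h2 h3 hgx
      rw [h2] at h1
      simp only [Pi.smul_apply, smul_eq_mul] at h1
      have h4 : (M (u + τ • k₂)) x ≤ 2 * (M u) x := h3.2
      have h5 : δ * (M (u + τ • k₂)) x ≤ δ * (2 * (M u) x) :=
        mul_le_mul_of_nonneg_left h4 hδ0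
      have h6 : 8 * (τ * e) / c * (M u) x = 4 * δ * (M u) x := by
        rw [hδdef]; ring
      rw [h6]
      nlinarith [mul_nonneg hδ0 hgx]
    intro k₁ k₂ hU1 hU2 hs1 hs2
    filter_upwards [one k₁ k₂ hU1 hU2 hs1 hs2, one k₂ k₁ hU2 hU1 hs2 hs1] with x p1 p2
    rw [abs_le]
    have hnr : ‖k₂ - k₁‖ = ‖k₁ - k₂‖ := norm_sub_rev _ _
    rw [hnr] at p2
    exact ⟨by linarith, by linarith⟩
  -- monotonicity of difference quotients in the step size
  have E3 : ∀ τ₁ τ₂ : ℝ, 0 < τ₁ → τ₁ ≤ τ₂ → ∀ k : Lp ℝ ⊤ η, u + τ₂ • k ∈ U →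
      (u + τ₁ • k ∈ U) ∧ ∀ᵐ x ∂μ,
        ((M (u + τ₂ • k)) x - (M u) x) / τ₂ ≤ ((M (u + τ₁ • k)) x - (M u) x) / τ₁ := by
    intro τ₁ τ₂ hτ₁ h12 k hU2
    have hτ₂ : 0 < τ₂ := lt_of_lt_of_le hτ₁ h12
    have hlam : τ₁ / τ₂ ∈ Set.Icc (0:ℝ) 1 :=
      ⟨by positivity, by rw [div_le_one hτ₂]; exact h12⟩
    have halg : (τ₁ / τ₂) • (u + τ₂ • k) + (1 - τ₁ / τ₂) • u = u + τ₁ • k := by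
      rw [smul_add, smul_smul, div_mul_cancel₀ _ hτ₂.ne']
      module
    have hmemU : u + τ₁ • k ∈ U := by
      rw [← halg]
      exact hU_convex hU2 hu hlam.1 (by linarith [hlam.2]) (by ring)
    refine ⟨hmemU, ?_⟩
    have hconc := hMconc _ hU2 u hu (τ₁ / τ₂) hlam
    rw [halg] at hconc
    filter_upwards [(Lp.coeFn_le _ _).2 hconc,
      Lp.coeFn_add ((τ₁ / τ₂) • M (u + τ₂ • k)) ((1 - τ₁ / τ₂) • M u),
      Lp.coeFn_smul (τ₁ / τ₂) (M (u + τ₂ • k)), Lp.coeFn_smul (1 - τ₁ / τ₂) (M u)]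
      with x h1 h2 h3 h4
    rw [h2, Pi.add_apply, h3, h4] at h1
    simp only [Pi.smul_apply, smul_eq_mul] at h1
    rw [div_le_div_iff₀ hτ₂ hτ₁]
    have h5 : (τ₁ / τ₂ * (M (u + τ₂ • k)) x + (1 - τ₁ / τ₂) * (M u) x) * τ₂
        ≤ (M (u + τ₁ • k)) x * τ₂ := mul_le_mul_of_nonneg_right h1 hτ₂.le
    field_simp [hτ₂.ne'] at h5
    nlinarith [h5]
  -- admissible step sizes along direction h
  have hlam₀1 : (0:ℝ) < lam₀ + 1 := by linarith
  set τb : ℝ := min (1 / (lam₀ + 1)) (c / (8 * (‖h‖ + 1))) with hτbdef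
  have hτb0 : 0 < τb := lt_min (by positivity) (by positivity)
  have hUh : ∀ τ : ℝ, 0 < τ → τ ≤ τb → u + τ • h ∈ U := by
    intro τ hτ hle
    have h1 : τ ≤ 1 / (lam₀ + 1) := hle.trans (min_le_left _ _)
    have h2 : τ * (lam₀ + 1) ≤ 1 := by
      rw [← le_div_iff₀ hlam₀1]
      exact h1
    have halg : (1 - τ * lam₀) • u + (τ * lam₀) • w₀ = u + τ • h := by
      rw [hh]; module
    rw [← halg]
    exact hU_convex hu hw₀ (by nlinarith) (by positivity) (by ring)
  have hτbh : τb * ‖h‖ ≤ c / 8 := by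
    have h1 : τb ≤ c / (8 * (‖h‖ + 1)) := min_le_right _ _
    rw [le_div_iff₀ (by positivity)] at h1
    nlinarith [norm_nonneg h, hτb0.le]
  -- general bound on the difference quotients in direction h
  set C₀ : ℝ := 8 * ‖h‖ / c with hC₀def
  have hC₀0 : 0 ≤ C₀ := by positivity
  have hBD : ∀ τ : ℝ, 0 < τ → τ ≤ τb →
      ∀ᵐ x ∂μ, |((M (u + τ • h)) x - (M u) x) / τ| ≤ C₀ * (M u) x := by
    intro τ hτ hle
    have hsm : τ * ‖h‖ ≤ c / 8 :=
      (mul_le_mul_of_nonneg_right hle (norm_nonneg h)).trans hτbh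
    filter_upwards [E1 τ hτ h (hUh τ hτ hle) hsm, hg0'] with x hx hgx
    rw [abs_div, abs_of_pos hτ, div_le_iff₀ hτ]
    calc |(M (u + τ • h)) x - (M u) x| ≤ 8 * (τ * ‖h‖) / c * (M u) x := hx.1
      _ = C₀ * (M u) x * τ := by rw [hC₀def]; ring
  -- the canonical sequence of step sizes
  set σ : ℕ → ℝ := fun m => τb / (m + 1) with hσdef
  have hσ0 : ∀ m, 0 < σ m := fun m => by positivity
  have hσle : ∀ m, σ m ≤ τb := by
    intro m
    rw [hσdef]
    apply div_le_self hτb0.le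
    have : (0:ℝ) ≤ (m:ℝ) := Nat.cast_nonneg m
    linarith
  have hσto0 : Tendsto σ atTop (𝓝 0) := by
    rw [hσdef]
    have h1 : Tendsto (fun m : ℕ => τb * (1 / ((m:ℝ) + 1))) atTop (𝓝 (τb * 0)) :=
      tendsto_one_div_add_atTop_nhds_zero_nat.const_mul τb
    simpa [mul_one_div, div_eq_mul_inv] using h1
  have hσsmall : ∀ ε : ℝ, 0 < ε → ∃ m, σ m ≤ ε := by
    intro ε hε
    have := hσto0.eventually (eventually_le_nhds hε)
    obtain ⟨m, hm⟩ := this.exists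
    exact ⟨m, by simpa using hm⟩
  -- the difference quotients along the canonical sequence
  set Dm : ℕ → X → ℝ := fun m x => ((M (u + σ m • h)) x - (M u) x) / σ m with hDmdef
  have hDmMeas : ∀ m, AEStronglyMeasurable (Dm m) μ := by
    intro m
    exact ((Lp.aestronglyMeasurable (M (u + σ m • h))).sub
      (Lp.aestronglyMeasurable (M u))).mul_const ((σ m)⁻¹) |>.congr
      (Eventually.of_forall fun x => by simp [hDmdef, Pi.sub_apply, div_eq_mul_inv])
  have hBm : ∀ m, ∀ᵐ x ∂μ, |Dm m x| ≤ C₀ * (M u) x := fun m => hBD (σ m) (hσ0 m) (hσle m)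
  have hMonPair : ∀ m m' : ℕ, m ≤ m' → ∀ᵐ x ∂μ, Dm m x ≤ Dm m' x := by
    intro m m' hmm'
    have hσσ : σ m' ≤ σ m := by
      rw [hσdef]
      apply div_le_div_of_nonneg_left hτb0.le (by positivity)
      have : (m:ℝ) ≤ (m':ℝ) := Nat.cast_le.2 hmm'
      linarith
    exact (E3 (σ m') (σ m) (hσ0 m') hσσ h (hUh _ (hσ0 m) (hσle m))).2
  have hMonAll : ∀ᵐ x ∂μ, ∀ m m' : ℕ, m ≤ m' → Dm m x ≤ Dm m' x := by
    rw [ae_all_iff]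
    intro m
    rw [ae_all_iff]
    intro m'
    by_cases hmm' : m ≤ m'
    · exact (hMonPair m m' hmm').mono fun x hx _ => hx
    · exact Eventually.of_forall fun x hx => absurd hx hmm'
  have hBAll : ∀ᵐ x ∂μ, ∀ m, |Dm m x| ≤ C₀ * (M u) x := ae_all_iff.2 hBm
  have hlimex : ∀ᵐ x ∂μ, ∃ l, Tendsto (fun m => Dm m x) atTop (𝓝 l) := by
    filter_upwards [hMonAll, hBAll] with x hmono hb
    refine ⟨⨆ m, Dm m x, tendsto_atTop_ciSup (fun a b hab => hmono a b hab) ?_⟩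
    refine ⟨C₀ * (M u) x, ?_⟩
    rintro y ⟨m, rfl⟩
    exact (abs_le.1 (hb m)).2
  obtain ⟨f, hfmeas, hftend⟩ := exists_stronglyMeasurable_limit_of_tendsto_ae hDmMeas hlimex
  have hfbd : ∀ᵐ x ∂μ, |f x| ≤ C₀ * (M u) x := by
    filter_upwards [hftend, hBAll] with x hx hb
    refine abs_le.2 ⟨?_, ?_⟩
    · exact ge_of_tendsto hx (Eventually.of_forall fun m => (abs_le.1 (hb m)).1)
    · exact le_of_tendsto hx (Eventually.of_forall fun m => (abs_le.1 (hb m)).2)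
  have hfup : ∀ᵐ x ∂μ, ∀ m, Dm m x ≤ f x := by
    filter_upwards [hftend, hMonAll] with x hx hmono
    intro m
    exact ge_of_tendsto hx (eventually_atTop.2 ⟨m, fun m' hm' => hmono m m' hm'⟩)
  -- membership of the dominating function in the relevant Lp spaces
  have hr0 : r ≠ 0 := fun h0 => by simp [h0] at hr1
  have h2top : (2:ℝ≥0∞) ≠ ⊤ := by norm_num
  have hg2 : MemLp (⇑(M u)) 2 μ := Lp.memLp (M u)
  have hCgr : MemLp (fun x => C₀ * (M u) x) r μ := hgr.const_mul C₀
  have hCgs : MemLp (fun x => C₀ * (M u) x) s μ := hgs.const_mul C₀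
  have hf2 : MemLp f 2 μ := by
    refine MemLp.of_le (memLp_interpolate hr0 hr2 hs2 h2top hCgr hCgs)
      hfmeas.aestronglyMeasurable ?_
    filter_upwards [hfbd] with x hx
    rw [Real.norm_eq_abs]
    exact hx.trans (le_abs_self _)
  set Md : Lp ℝ 2 μ := hf2.toLp f with hMddef
  have hMdcoe : ⇑Md =ᵐ[μ] f := hf2.coeFn_toLp
  have hfr : MemLp f r μ := by
    refine MemLp.of_le hCgr hfmeas.aestronglyMeasurable ?_
    filter_upwards [hfbd] with x hx
    rw [Real.norm_eq_abs]
    exact hx.trans (le_abs_self _)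
  have hfs : MemLp f s μ := by
    refine MemLp.of_le hCgs hfmeas.aestronglyMeasurable ?_
    filter_upwards [hfbd] with x hx
    rw [Real.norm_eq_abs]
    exact hx.trans (le_abs_self _)
  have hMdr : MemLp (⇑Md) r μ := MemLp.ae_eq hMdcoe.symm hfr
  have hMds : MemLp (⇑Md) s μ := MemLp.ae_eq hMdcoe.symm hfs
  -- the main convergence property
  have main : ∀ (τn : ℕ → ℝ) (hn : ℕ → Lp ℝ ⊤ η),
      (∀ n, 0 < τn n) → Tendsto τn atTop (𝓝 0) →
      (∀ n, ∃ lam : ℝ, 0 ≤ lam ∧ ∃ w ∈ U, hn n = lam • (w - u)) →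
      Tendsto (fun n => ‖h - hn n‖) atTop (𝓝 0) →
      (∀ n, u + τn n • hn n ∈ U) →
      ∀ q : ℝ≥0∞, r ≤ q → q ≤ s → q ≠ ⊤ →
        Tendsto (fun n => eLpNorm (⇑((τn n)⁻¹ • (M (u + τn n • hn n) - M u) - Md)) q μ)
          atTop (𝓝 0) := by
    intro τn hn hpos hτ0 _hconen hhn hUn q hrq hqs hqt
    have hq1 : (1:ℝ≥0∞) ≤ q := hr1.trans hrq
    have hq0 : q ≠ 0 := by
      intro h0
      rw [h0] at hq1
      simp at hq1
    have hgq : MemLp (⇑(M u)) q μ := memLp_interpolate hr0 hrq hqs hqt hgr hgs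
    set DQ : ℕ → X → ℝ := fun n x => ((M (u + τn n • hn n)) x - (M u) x) / τn n with hDQdef
    set DH : ℕ → X → ℝ := fun n x => ((M (u + τn n • h)) x - (M u) x) / τn n with hDHdef
    have hDQm : ∀ n, AEStronglyMeasurable (DQ n) μ := by
      intro n
      exact ((Lp.aestronglyMeasurable (M (u + τn n • hn n))).sub
        (Lp.aestronglyMeasurable (M u))).mul_const ((τn n)⁻¹) |>.congr
        (Eventually.of_forall fun x => by simp [hDQdef, Pi.sub_apply, div_eq_mul_inv])
    have hDHm : ∀ n, AEStronglyMeasurable (DH n) μ := by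
      intro n
      exact ((Lp.aestronglyMeasurable (M (u + τn n • h))).sub
        (Lp.aestronglyMeasurable (M u))).mul_const ((τn n)⁻¹) |>.congr
        (Eventually.of_forall fun x => by simp [hDHdef, Pi.sub_apply, div_eq_mul_inv])
    have hcoe : ∀ n, ⇑((τn n)⁻¹ • (M (u + τn n • hn n) - M u) - Md)
        =ᵐ[μ] fun x => (DQ n x - DH n x) + (DH n x - f x) := by
      intro n
      filter_upwards [Lp.coeFn_sub ((τn n)⁻¹ • (M (u + τn n • hn n) - M u)) Md,
        Lp.coeFn_smul (τn n)⁻¹ (M (u + τn n • hn n) - M u),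
        Lp.coeFn_sub (M (u + τn n • hn n)) (M u), hMdcoe] with x h1 h2 h3 h4
      rw [h1, Pi.sub_apply, h2, Pi.smul_apply, h3, Pi.sub_apply, h4]
      simp only [hDQdef, hDHdef, smul_eq_mul]
      ring
    have hsplit : ∀ n, eLpNorm (⇑((τn n)⁻¹ • (M (u + τn n • hn n) - M u) - Md)) q μ
        ≤ eLpNorm (fun x => DQ n x - DH n x) q μ
          + eLpNorm (fun x => DH n x - f x) q μ := by
      intro n
      rw [eLpNorm_congr_ae (hcoe n)]
      exact eLpNorm_add_le ((hDQm n).sub (hDHm n))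
        ((hDHm n).sub hfmeas.aestronglyMeasurable) hq1
    have hev : ∀ᶠ n in atTop, τn n ≤ τb ∧ τn n * ‖hn n‖ ≤ c / 8 ∧ τn n * ‖h‖ ≤ c / 8 := by
      have hb1 : ∀ᶠ n in atTop, ‖hn n‖ ≤ ‖h‖ + 1 := by
        filter_upwards [hhn.eventually (gt_mem_nhds one_pos)] with n hn1
        have e0 : h - (h - hn n) = hn n := by abel
        have e2 : ‖h - (h - hn n)‖ ≤ ‖h‖ + ‖h - hn n‖ := norm_sub_le _ _
        rw [e0] at e2
        linarith
      have hb2 : ∀ᶠ n in atTop, τn n ≤ min τb (c / (8 * (‖h‖ + 1))) := by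
        refine hτ0.eventually (eventually_le_nhds ?_)
        exact lt_min hτb0 (by positivity)
      filter_upwards [hb1, hb2] with n h1 h2
      have h3 : τn n ≤ τb := h2.trans (min_le_left _ _)
      have h4 : τn n ≤ c / (8 * (‖h‖ + 1)) := h2.trans (min_le_right _ _)
      refine ⟨h3, ?_, (mul_le_mul_of_nonneg_right h3 (norm_nonneg h)).trans hτbh⟩
      have h5 : τn n * ‖hn n‖ ≤ τn n * (‖h‖ + 1) :=
        mul_le_mul_of_nonneg_left h1 (hpos n).le
      rw [le_div_iff₀ (by positivity)] at h4
      nlinarith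
    -- first piece: direction error
    have T1 : Tendsto (fun n => eLpNorm (fun x => DQ n x - DH n x) q μ) atTop (𝓝 0) := by
      have hKq : eLpNorm (⇑(M u)) q μ ≠ ⊤ := hgq.2.ne
      have hup : ∀ᶠ n in atTop, eLpNorm (fun x => DQ n x - DH n x) q μ
          ≤ ENNReal.ofReal (8 * ‖h - hn n‖ / c) * eLpNorm (⇑(M u)) q μ := by
        filter_upwards [hev] with n hn3
        obtain ⟨h3, h4, h5⟩ := hn3
        have hE2 := E2 (τn n) (hpos n) (hn n) h (hUn n) (hUh _ (hpos n) h3) h4 h5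
        have hmono : ∀ᵐ x ∂μ, ‖DQ n x - DH n x‖
            ≤ ‖(8 * ‖h - hn n‖ / c) * (M u) x‖ := by
          filter_upwards [hE2, hg0'] with x hx hgx
          rw [Real.norm_eq_abs, Real.norm_eq_abs]
          have e1 : DQ n x - DH n x
              = ((M (u + τn n • hn n)) x - (M (u + τn n • h)) x) / τn n := by
            simp only [hDQdef, hDHdef]
            ring
          rw [e1, abs_div, abs_of_pos (hpos n), div_le_iff₀ (hpos n)]
          have hrev : ‖hn n - h‖ = ‖h - hn n‖ := norm_sub_rev _ _
          have hnn : (0:ℝ) ≤ 8 * ‖h - hn n‖ / c * (M u) x :=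
            mul_nonneg (by positivity) hgx
          calc |(M (u + τn n • hn n)) x - (M (u + τn n • h)) x|
              ≤ 8 * (τn n * ‖hn n - h‖) / c * (M u) x := hx
            _ = 8 * ‖h - hn n‖ / c * (M u) x * τn n := by rw [hrev]; ring
            _ = |8 * ‖h - hn n‖ / c * (M u) x| * τn n := by rw [abs_of_nonneg hnn]
        have hstep1 : eLpNorm (fun x => DQ n x - DH n x) q μ
            ≤ eLpNorm ((8 * ‖h - hn n‖ / c) • ⇑(M u) : X → ℝ) q μ := by
          refine eLpNorm_mono_ae ?_
          filter_upwards [hmono] with x hx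
          simpa [Pi.smul_apply, smul_eq_mul] using hx
        have hstep2 : eLpNorm ((8 * ‖h - hn n‖ / c) • ⇑(M u) : X → ℝ) q μ
            = (‖(8 * ‖h - hn n‖ / c)‖₊ : ℝ≥0∞) * eLpNorm (⇑(M u)) q μ :=
          eLpNorm_const_smul (8 * ‖h - hn n‖ / c) (⇑(M u)) q μ
        have hstep3 : (‖(8 * ‖h - hn n‖ / c)‖₊ : ℝ≥0∞)
            = ENNReal.ofReal (8 * ‖h - hn n‖ / c) :=
          Real.enorm_eq_ofReal (by positivity)
        rw [hstep2, hstep3] at hstep1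
        exact hstep1
      have hto : Tendsto (fun n => ENNReal.ofReal (8 * ‖h - hn n‖ / c)
          * eLpNorm (⇑(M u)) q μ) atTop (𝓝 0) := by
        have h1 : Tendsto (fun n => 8 * ‖h - hn n‖ / c) atTop (𝓝 0) := by
          have h2 := hhn.const_mul (8 / c)
          rw [mul_zero] at h2
          exact h2.congr fun n => by ring
        have h3 := ENNReal.tendsto_ofReal h1
        rw [ENNReal.ofReal_zero] at h3
        have h4 := ENNReal.Tendsto.mul_const h3 (Or.inr hKq)
        rwa [zero_mul] at h4
      exact tendsto_of_tendsto_of_tendsto_of_le_of_le' tendsto_const_nhds hto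
        (Eventually.of_forall fun n => zero_le) hup
    -- second piece: Gateaux error, via dominated convergence
    have T2 : Tendsto (fun n => eLpNorm (fun x => DH n x - f x) q μ) atTop (𝓝 0) := by
      obtain ⟨N, hN⟩ := eventually_atTop.1 hev
      rw [← tendsto_add_atTop_iff_nat N]
      have hA : ∀ᵐ x ∂μ, ∀ n m : ℕ, σ m ≤ τn n → τn n ≤ τb → DH n x ≤ Dm m x := by
        rw [ae_all_iff]
        intro n
        rw [ae_all_iff]
        intro m
        by_cases h1 : σ m ≤ τn n ∧ τn n ≤ τb
        · exact ((E3 (σ m) (τn n) (hσ0 m) h1.1 h (hUh _ (hpos n) h1.2)).2).mono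
            fun x hx _ _ => hx
        · exact Eventually.of_forall fun x h2 h3 => absurd ⟨h2, h3⟩ h1
      have hB : ∀ᵐ x ∂μ, ∀ n m : ℕ, τn n ≤ σ m → Dm m x ≤ DH n x := by
        rw [ae_all_iff]
        intro n
        rw [ae_all_iff]
        intro m
        by_cases h1 : τn n ≤ σ m
        · exact ((E3 (τn n) (σ m) (hpos n) h1 h (hUh _ (hσ0 m) (hσle m))).2).mono
            fun x hx _ => hx
        · exact Eventually.of_forall fun x h2 => absurd h2 h1
      refine tendsto_eLpNorm_zero_of_dominated hq0 hqt
        (fun k => (hDHm (k + N)).sub hfmeas.aestronglyMeasurable)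
        (G := fun x => 2 * (C₀ * (M u) x))
        (memLp_interpolate hr0 hrq hqs hqt ((hgr.const_mul C₀).const_mul 2)
          ((hgs.const_mul C₀).const_mul 2)) ?_ ?_
      · intro k
        have hτle : τn (k + N) ≤ τb := (hN (k + N) (Nat.le_add_left N k)).1
        filter_upwards [hBD (τn (k + N)) (hpos _) hτle, hfbd] with x h1 h2
        rw [Real.norm_eq_abs]
        have h3 : |DH (k + N) x - f x| ≤ |DH (k + N) x| + |f x| := abs_sub _ _
        have h4 : |DH (k + N) x| ≤ C₀ * (M u) x := h1
        linarith
      · filter_upwards [hA, hB, hfup, hftend] with x hAx hBx hupx htx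
        have hDHle : ∀ k, DH (k + N) x ≤ f x := by
          intro k
          obtain ⟨m, hm⟩ := hσsmall (τn (k + N)) (hpos (k + N))
          exact (hAx (k + N) m hm (hN (k + N) (Nat.le_add_left N k)).1).trans (hupx m)
        have hconv : Tendsto (fun k => DH (k + N) x) atTop (𝓝 (f x)) := by
          rw [Metric.tendsto_atTop]
          intro ε hε
          obtain ⟨m₀, hm₀⟩ := (Metric.tendsto_atTop.1 htx) ε hε
          have h3 : dist (Dm m₀ x) (f x) < ε := hm₀ m₀ le_rfl
          have hev2 : ∀ᶠ k in atTop, τn (k + N) ≤ σ m₀ :=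
            (hτ0.comp (tendsto_add_atTop_nat N)).eventually
              (eventually_le_nhds (hσ0 m₀))
          obtain ⟨K, hK⟩ := eventually_atTop.1 hev2
          refine ⟨K, fun k hk => ?_⟩
          have h5 : Dm m₀ x ≤ DH (k + N) x := hBx (k + N) m₀ (hK k hk)
          have h6 : DH (k + N) x ≤ f x := hDHle k
          rw [Real.dist_eq] at h3 ⊢
          have h7 : f x - Dm m₀ x < ε := by
            linarith [(abs_lt.1 h3).1]
          have h9 : |DH (k + N) x - f x| = f x - DH (k + N) x := by
            rw [abs_of_nonpos (by linarith)]
            ring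
          rw [h9]
          linarith
        have h10 := hconv.sub (tendsto_const_nhds (x := f x))
        simpa using h10
    refine tendsto_of_tendsto_of_tendsto_of_le_of_le' tendsto_const_nhds ?_
      (Eventually.of_forall fun n => zero_le) (Eventually.of_forall hsplit)
    have := T1.add T2
    rwa [add_zero] at this
  -- assemble: existence and uniqueness
  refine ⟨Md, ⟨hMdr, hMds, main⟩, ?_⟩
  intro Md' hMd'
  obtain ⟨_, _, hprop⟩ := hMd'
  have hconst : Tendsto (fun _ : ℕ => ‖h - h‖) atTop (𝓝 0) := by
    simp [sub_self]
  have hconem : ∀ _ : ℕ, ∃ lam : ℝ, 0 ≤ lam ∧ ∃ w ∈ U, h = lam • (w - u) :=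
    fun _ => ⟨lam₀, hlam₀, w₀, hw₀, hh⟩
  have hUm : ∀ m : ℕ, u + σ m • h ∈ U := fun m => hUh _ (hσ0 m) (hσle m)
  have c1 := hprop σ (fun _ => h) hσ0 hσto0 hconem hconst hUm 2 hr2 hs2 (by norm_num)
  have c2 := main σ (fun _ => h) hσ0 hσto0 hconem hconst hUm 2 hr2 hs2 (by norm_num)
  have hle : ∀ m : ℕ, eLpNorm (⇑(Md' - Md)) 2 μ
      ≤ eLpNorm (⇑((σ m)⁻¹ • (M (u + σ m • h) - M u) - Md')) 2 μ
        + eLpNorm (⇑((σ m)⁻¹ • (M (u + σ m • h) - M u) - Md)) 2 μ := by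
    intro m
    have hcg : ⇑(Md' - Md) =ᵐ[μ]
        (fun x => (((σ m)⁻¹ • (M (u + σ m • h) - M u) - Md) x)
          - (((σ m)⁻¹ • (M (u + σ m • h) - M u) - Md') x)) := by
      filter_upwards [Lp.coeFn_sub Md' Md,
        Lp.coeFn_sub ((σ m)⁻¹ • (M (u + σ m • h) - M u)) Md',
        Lp.coeFn_sub ((σ m)⁻¹ • (M (u + σ m • h) - M u)) Md] with x a b cc
      rw [a, Pi.sub_apply, b, cc, Pi.sub_apply, Pi.sub_apply]
      ring
    rw [eLpNorm_congr_ae hcg]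
    have := eLpNorm_sub_le (Lp.aestronglyMeasurable ((σ m)⁻¹ • (M (u + σ m • h) - M u) - Md))
      (Lp.aestronglyMeasurable ((σ m)⁻¹ • (M (u + σ m • h) - M u) - Md'))
      (one_le_two : (1:ℝ≥0∞) ≤ 2)
    exact this.trans (by rw [add_comm])
  have hsum : Tendsto (fun m : ℕ =>
      eLpNorm (⇑((σ m)⁻¹ • (M (u + σ m • h) - M u) - Md')) 2 μ
        + eLpNorm (⇑((σ m)⁻¹ • (M (u + σ m • h) - M u) - Md)) 2 μ) atTop (𝓝 0) := by
    have := c1.add c2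
    rwa [add_zero] at this
  have hz0 : eLpNorm (⇑(Md' - Md)) 2 μ = 0 :=
    le_antisymm (ge_of_tendsto hsum (Eventually.of_forall hle)) zero_le
  have hae : ⇑(Md' - Md) =ᵐ[μ] 0 :=
    (eLpNorm_eq_zero_iff (Lp.aestronglyMeasurable _) (by norm_num)).1 hz0
  have hMdeq : Md' - Md = 0 := by
    apply Lp.ext
    filter_upwards [hae, Lp.coeFn_zero ℝ 2 μ] with x h1 h2
    rw [h1, h2]
  exact sub_eq_zero.1 hMdeq
end

section
/- Suppose Assumptions (L) and (D) both hold and let 1 ≤ r ≤ 2 be such that S(p, u) ∈ L^{[r,∞]}(X) for all p ∈ P and u ∈ U. Then for every u ∈ U ∩ L^∞_⊕(Y), every h ∈ ℝ⁺(U − u), and all sequences {τ_n} ⊂ (0, ∞) and {h_n} ⊂ ℝ⁺(U − u) with τ_n → 0, ‖h − h_n‖_{L^∞(Y)} → 0, and u + τ_n h_n ∈ U for all n, the difference quotients (M(u + τ_n h_n) − M(u))/τ_n converge to the Hadamard directional derivative M'(u; h) ∈ L^{[r,∞]}(X) weakly-* against L¹(X), i.e., lim_{n→∞} ∫_X z ·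 ((M(u + τ_n h_n) − M(u))/τ_n − M'(u; h)) dμ = 0 for every z ∈ L¹(X). -/
open MeasureTheory Filter Topology ENNReal

set_option linter.unusedSectionVars false

lemma aux_mem_top_bound {X : Type*} [MeasurableSpace X] {μ : Measure X} {f : X → ℝ}
    (hf : MemLp f ⊤ μ) : ∃ C : ℝ, 0 ≤ C ∧ ∀ᵐ x ∂μ, |f x| ≤ C := by
  refine ⟨(eLpNormEssSup f μ).toReal, ENNReal.toReal_nonneg, ?_⟩
  have h2 : eLpNormEssSup f μ ≠ ⊤ := by
    have := hf.2; rwa [eLpNorm_exponent_top, lt_top_iff_ne_top] at this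
  filter_upwards [ae_le_eLpNormEssSup (f := f) (μ := μ)] with x hx
  calc |f x| = ((‖f x‖₊ : ℝ≥0∞)).toReal := by simp
  _ ≤ _ := ENNReal.toReal_mono h2 hx

lemma aux_Lp_top_ae_bound {Y : Type*} [MeasurableSpace Y] {η : Measure Y} (f : Lp ℝ ⊤ η) :
    ∀ᵐ y ∂η, |f y| ≤ ‖f‖ := by
  have h2 : eLpNormEssSup (⇑f) η ≠ ⊤ := by
    have := Lp.eLpNorm_ne_top f; rwa [eLpNorm_exponent_top] at this
  filter_upwards [ae_le_eLpNormEssSup (f := ⇑f) (μ := η)] with y hy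
  rw [Lp.norm_def, eLpNorm_exponent_top]
  calc |f y| = ((‖f y‖₊ : ℝ≥0∞)).toReal := by simp
  _ ≤ _ := ENNReal.toReal_mono h2 hy

section Part1
variable {X : Type*} [MeasurableSpace X] {μ : Measure X}
    {Y : Type*} [MeasurableSpace Y] {η : Measure Y}
    {V : Type*} [AddCommGroup V] [PartialOrder V] [Module ℝ V]
    (P : Set V)
    (U : Set (Lp ℝ ⊤ η))
    (hU_scale : ∀ u ∈ U, ∀ lam : ℝ, lam ∈ Set.Ioc (0 : ℝ) 1 → lam • u ∈ U)
    (S : V → Lp ℝ ⊤ η → Lp ℝ 2 μ)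
    (hS_nonneg : ∀ p : V, ∀ u ∈ U, 0 ≤ S p u)
    (hS_mono_p : ∀ u ∈ U, ∀ p₁ p₂ : V, p₁ ≤ p₂ → S p₁ u ≤ S p₂ u)
    (hS_mono_u : ∀ p ∈ P, ∀ u₁ ∈ U, ∀ u₂ ∈ U, u₁ ≤ u₂ → S p u₁ ≤ S p u₂)
    (hS_superhom : ∀ p ∈ P, ∀ u ∈ U, ∀ lam : ℝ, lam ∈ Set.Ioc (0 : ℝ) 1 →
      lam • S p u ≤ S (lam • p) (lam • u))
    (Φ : Lp ℝ 2 μ → V)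
    (hΦ_mem : ∀ v, Φ v ∈ P)
    (hΦ_superhom : ∀ v : Lp ℝ 2 μ, 0 ≤ v → ∀ lam : ℝ, lam ∈ Set.Ioc (0 : ℝ) 1 →
      lam • Φ v ≤ Φ (lam • v))
    (M : Lp ℝ ⊤ η → Lp ℝ 2 μ)
    (hM_sol : ∀ u ∈ U, M u = S (Φ (M u)) u)
    (hM_max : ∀ u ∈ U, ∀ v : Lp ℝ 2 μ, v ≤ S (Φ v) u → v ≤ M u)

include S hS_nonneg hM_sol in
lemma aux_M_nonneg : ∀ u₁ ∈ U, 0 ≤ M u₁ := by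
  intro u₁ h₁
  rw [hM_sol u₁ h₁]; exact hS_nonneg _ u₁ h₁

include P hΦ_mem hS_mono_u hM_sol hM_max in
lemma aux_M_mono : ∀ u₁ ∈ U, ∀ u₂ ∈ U, u₁ ≤ u₂ → M u₁ ≤ M u₂ := by
  intro u₁ h₁ u₂ h₂ h12
  refine hM_max u₂ h₂ (M u₁) ?_
  calc M u₁ = S (Φ (M u₁)) u₁ := hM_sol u₁ h₁
  _ ≤ S (Φ (M u₁)) u₂ := hS_mono_u _ (hΦ_mem _) u₁ h₁ u₂ h₂ h12

include P hU_scale hS_nonneg hS_mono_p hS_superhom hΦ_mem hΦ_superhom hM_sol hM_max in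
lemma aux_M_shom : ∀ u₁ ∈ U, ∀ lam : ℝ, lam ∈ Set.Ioc (0 : ℝ) 1 →
    lam • M u₁ ≤ M (lam • u₁) := by
  intro u₁ h₁ lam hlam
  have h0 : 0 ≤ M u₁ := aux_M_nonneg U S hS_nonneg Φ M hM_sol u₁ h₁
  have hU' : lam • u₁ ∈ U := hU_scale u₁ h₁ lam hlam
  refine hM_max (lam • u₁) hU' _ ?_
  calc lam • M u₁ = lam • S (Φ (M u₁)) u₁ := by rw [← hM_sol u₁ h₁]
  _ ≤ S (lam • Φ (M u₁)) (lam • u₁) := hS_superhom _ (hΦ_mem _) u₁ h₁ lam hlam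
  _ ≤ S (Φ (lam • M u₁)) (lam • u₁) :=
      hS_mono_p _ hU' _ _ (hΦ_superhom _ h0 lam hlam)

include P hU_scale hS_nonneg hS_mono_p hS_mono_u hS_superhom hΦ_mem hΦ_superhom hM_sol hM_max in
lemma aux_M_comp : ∀ u₁ ∈ U, ∀ u₂ ∈ U, ∀ lam : ℝ, lam ∈ Set.Ioc (0 : ℝ) 1 →
    lam • u₁ ≤ u₂ → lam • M u₁ ≤ M u₂ := by
  intro u₁ h₁ u₂ h₂ lam hlam hle
  calc lam • M u₁ ≤ M (lam • u₁) :=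
        aux_M_shom P U hU_scale S hS_nonneg hS_mono_p hS_superhom Φ hΦ_mem hΦ_superhom M
          hM_sol hM_max u₁ h₁ lam hlam
  _ ≤ M u₂ := aux_M_mono P U S hS_mono_u Φ hΦ_mem M hM_sol hM_max _
        (hU_scale u₁ h₁ lam hlam) u₂ h₂ hle

include P hU_scale hS_nonneg hS_mono_p hS_mono_u hS_superhom hΦ_mem hΦ_superhom hM_sol hM_max in
lemma aux_M_lip : ∀ u₁ ∈ U, ∀ u₂ ∈ U, ∀ c₁ : ℝ, 0 < c₁ → (∀ᵐ y ∂η, c₁ ≤ u₁ y) →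
    ∀ δ : ℝ, ‖u₂ - u₁‖ ≤ δ → δ < c₁ →
    ∀ᵐ x ∂μ, c₁ * |(M u₂ : Lp ℝ 2 μ) x - (M u₁ : Lp ℝ 2 μ) x| ≤ δ * (M u₁ : Lp ℝ 2 μ) x := by
  intro u₁ h₁ u₂ h₂ c₁ hc₁ hlb δ hδ hδc
  have hcomp := aux_M_comp P U hU_scale S hS_nonneg hS_mono_p hS_mono_u hS_superhom Φ hΦ_mem
    hΦ_superhom M hM_sol hM_max
  have hδ0 : 0 ≤ δ := le_trans (norm_nonneg _) hδ
  have hdiff : ∀ᵐ y ∂η, |u₂ y - u₁ y| ≤ δ := by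
    filter_upwards [aux_Lp_top_ae_bound (u₂ - u₁), Lp.coeFn_sub u₂ u₁] with y h1 h2
    calc |u₂ y - u₁ y| = |(u₂ - u₁) y| := by rw [h2]; simp
    _ ≤ ‖u₂ - u₁‖ := h1
    _ ≤ δ := hδ
  have hcd : (0:ℝ) < c₁ + δ := by linarith
  -- first inequality : (c₁/(c₁+δ)) • u₂ ≤ u₁
  have hord1 : (c₁ / (c₁ + δ)) • M u₂ ≤ M u₁ := by
    refine hcomp u₂ h₂ u₁ h₁ _ ⟨by positivity, by rw [div_le_one hcd]; linarith⟩ ?_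
    rw [← Lp.coeFn_le]
    filter_upwards [hdiff, hlb, Lp.coeFn_smul (c₁ / (c₁ + δ)) u₂] with y hy1 hy2 hy3
    rw [hy3]
    simp only [Pi.smul_apply, smul_eq_mul]
    rw [abs_le] at hy1
    rw [div_mul_eq_mul_div, div_le_iff₀ hcd]
    nlinarith
  -- second inequality : (1 - δ/c₁) • u₁ ≤ u₂
  have hord2 : (1 - δ / c₁) • M u₁ ≤ M u₂ := by
    refine hcomp u₁ h₁ u₂ h₂ _
      ⟨by rw [sub_pos, div_lt_one hc₁]; exact hδc, by
        have : 0 ≤ δ / c₁ := by positivity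
        linarith⟩ ?_
    rw [← Lp.coeFn_le]
    filter_upwards [hdiff, hlb, Lp.coeFn_smul (1 - δ / c₁) u₁] with y hy1 hy2 hy3
    rw [hy3]
    simp only [Pi.smul_apply, smul_eq_mul]
    rw [abs_le] at hy1
    have hδc₁ : δ / c₁ * c₁ = δ := div_mul_cancel₀ δ hc₁.ne'
    have := mul_le_mul_of_nonneg_left hy2 (div_nonneg hδ0 hc₁.le)
    nlinarith
  -- combine
  have hae1 := (Lp.coeFn_le _ _).mpr hord1
  have hae2 := (Lp.coeFn_le _ _).mpr hord2
  have hM₁0 := (Lp.coeFn_nonneg (M u₁)).mpr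
    (aux_M_nonneg U S hS_nonneg Φ M hM_sol u₁ h₁)
  filter_upwards [hae1, hae2, hM₁0, Lp.coeFn_smul (c₁ / (c₁ + δ)) (M u₂),
    Lp.coeFn_smul (1 - δ / c₁) (M u₁)] with x k1 k2 k0 k3 k4
  rw [k3] at k1
  rw [k4] at k2
  simp only [Pi.smul_apply, smul_eq_mul, Pi.zero_apply] at k1 k2 k0
  have hA : c₁ * (M u₂) x ≤ (c₁ + δ) * (M u₁) x := by
    rw [div_mul_eq_mul_div, div_le_iff₀ hcd] at k1
    nlinarith
  have hδc₁ : δ / c₁ * c₁ = δ := div_mul_cancel₀ δ hc₁.ne'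
  have hB : (c₁ - δ) * (M u₁) x ≤ c₁ * (M u₂) x := by
    have := mul_le_mul_of_nonneg_left k2 hc₁.le
    nlinarith
  rcases abs_cases ((M u₂ : Lp ℝ 2 μ) x - (M u₁ : Lp ℝ 2 μ) x) with ⟨he, _⟩ | ⟨he, _⟩ <;>
    rw [he] <;> nlinarith

end Part1

set_option maxHeartbeats 2000000 in
/-- Corollary 4.4 of the paper, case `s = ∞`: weak-* convergence of the
difference quotients of the maximal solution map `M` against `L¹(X)` towards the Hadamard
directional derivative `M'(u; h)` under Assumptions (L) and (D). -/
theorem stmt_9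
    {X : Type*} [MeasurableSpace X] {μ : Measure X} [μ.IsComplete]
    {Y : Type*} [MeasurableSpace Y] {η : Measure Y} [η.IsComplete]
    {V : Type*} [AddCommGroup V] [PartialOrder V] [Module ℝ V]
    (P : Set V) (hP_convex : Convex ℝ P)
    (hP_scale : ∀ p ∈ P, ∀ lam : ℝ, lam ∈ Set.Ioc (0 : ℝ) 1 → lam • p ∈ P)
    (U : Set (Lp ℝ ⊤ η)) (hU_convex : Convex ℝ U)
    (hU_nonneg : ∀ u ∈ U, 0 ≤ u)
    (hU_scale : ∀ u ∈ U, ∀ lam : ℝ, lam ∈ Set.Ioc (0 : ℝ) 1 → lam • u ∈ U)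
    (S : V → Lp ℝ ⊤ η → Lp ℝ 2 μ)
    (hS_nonneg : ∀ p : V, ∀ u ∈ U, 0 ≤ S p u)
    (hS_mono_p : ∀ u ∈ U, ∀ p₁ p₂ : V, p₁ ≤ p₂ → S p₁ u ≤ S p₂ u)
    (hS_mono_u : ∀ p ∈ P, ∀ u₁ ∈ U, ∀ u₂ ∈ U, u₁ ≤ u₂ → S p u₁ ≤ S p u₂)
    (hS_superhom : ∀ p ∈ P, ∀ u ∈ U, ∀ lam : ℝ, lam ∈ Set.Ioc (0 : ℝ) 1 →
      lam • S p u ≤ S (lam • p) (lam • u))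
    (hS_concave : ∀ p₁ ∈ P, ∀ p₂ ∈ P, ∀ u₁ ∈ U, ∀ u₂ ∈ U,
      ∀ lam ∈ Set.Icc (0 : ℝ) 1,
      lam • S p₁ u₁ + (1 - lam) • S p₂ u₂ ≤
        S (lam • p₁ + (1 - lam) • p₂) (lam • u₁ + (1 - lam) • u₂))
    (Φ : Lp ℝ 2 μ → V)
    (hΦ_mem : ∀ v, Φ v ∈ P)
    (hΦ_mono : ∀ v₁ v₂ : Lp ℝ 2 μ, v₁ ≤ v₂ → Φ v₁ ≤ Φ v₂)
    (hΦ_superhom : ∀ v : Lp ℝ 2 μ, 0 ≤ v → ∀ lam : ℝ, lam ∈ Set.Ioc (0 : ℝ) 1 →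
      lam • Φ v ≤ Φ (lam • v))
    (hΦ_concave : ∀ v₁ v₂ : Lp ℝ 2 μ, 0 ≤ v₁ → 0 ≤ v₂ →
      ∀ lam ∈ Set.Icc (0 : ℝ) 1,
      lam • Φ v₁ + (1 - lam) • Φ v₂ ≤ Φ (lam • v₁ + (1 - lam) • v₂))
    (r : ℝ≥0∞) (hr1 : 1 ≤ r) (hr2 : r ≤ 2)
    (hSrs : ∀ p ∈ P, ∀ u ∈ U, MemLp (⇑(S p u)) r μ ∧ MemLp (⇑(S p u)) ⊤ μ)
    (M : Lp ℝ ⊤ η → Lp ℝ 2 μ)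
    (hM_sol : ∀ u ∈ U, M u = S (Φ (M u)) u)
    (hM_max : ∀ u ∈ U, ∀ v : Lp ℝ 2 μ, v ≤ S (Φ v) u → v ≤ M u)
    (u : Lp ℝ ⊤ η) (hu : u ∈ U)
    (c : ℝ) (hc : 0 < c) (huc : ∀ᵐ y ∂η, c ≤ u y)
    (h : Lp ℝ ⊤ η)
    (hcone : ∃ lam : ℝ, 0 ≤ lam ∧ ∃ w ∈ U, h = lam • (w - u))
    (Md : Lp ℝ 2 μ) (hMd_r : MemLp (⇑Md) r μ) (hMd_top : MemLp (⇑Md) ⊤ μ)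
    (hMd_lim : ∀ τn : ℕ → ℝ, (∀ n, 0 < τn n) → Tendsto τn atTop (𝓝 0) →
      (∀ n, u + τn n • h ∈ U) →
      ∀ᵐ x ∂μ, Tendsto
        (fun n => (((τn n)⁻¹ • (M (u + τn n • h) - M u) : Lp ℝ 2 μ) x))
        atTop (𝓝 (Md x))) :
    ∀ (τn : ℕ → ℝ) (hn : ℕ → Lp ℝ ⊤ η),
      (∀ n, 0 < τn n) → Tendsto τn atTop (𝓝 0) →
      (∀ n, ∃ lam : ℝ, 0 ≤ lam ∧ ∃ w ∈ U, hn n = lam • (w - u)) →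
      Tendsto (fun n => ‖h - hn n‖) atTop (𝓝 0) →
      (∀ n, u + τn n • hn n ∈ U) →
      ∀ z : X → ℝ, Integrable z μ →
        Tendsto
          (fun n => ∫ x,
            z x * ((((τn n)⁻¹ • (M (u + τn n • hn n) - M u) : Lp ℝ 2 μ) x) - Md x) ∂μ)
          atTop (𝓝 (0 : ℝ)) := by
  intro τn hn hτpos hτ0 hconen hhnlim hUmem z hz
  obtain ⟨lam₀, hlam₀, w, hw, hh⟩ := hcone
  have hlip := aux_M_lip P U hU_scale S hS_nonneg hS_mono_p hS_mono_u hS_superhom Φ hΦ_mem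
    hΦ_superhom M hM_sol hM_max
  -- bounds on M u and Md
  have hMuTop : MemLp (⇑(M u)) ⊤ μ := by
    rw [hM_sol u hu]; exact (hSrs _ (hΦ_mem _) u hu).2
  obtain ⟨C, hC0, hMuC⟩ := aux_mem_top_bound hMuTop
  obtain ⟨C', hC'0, hMdC⟩ := aux_mem_top_bound hMd_top
  have hMu0ae : ∀ᵐ x ∂μ, (0:ℝ) ≤ (M u : Lp ℝ 2 μ) x := by
    filter_upwards [(Lp.coeFn_nonneg (M u)).mpr
      (aux_M_nonneg U S hS_nonneg Φ M hM_sol u hu)] with x hx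
    simpa using hx
  set B : ℝ := ‖h‖ + 1 with hB
  have hB0 : 0 < B := by positivity
  have hB1 : 1 ≤ B := by have := norm_nonneg h; simp only [hB]; linarith
  -- choice of the tail index N
  have e1 : ∀ᶠ n in atTop, ‖h - hn n‖ ≤ 1 := hhnlim.eventually (eventually_le_nhds one_pos)
  have e2 : ∀ᶠ n in atTop, τn n ≤ c / (4 * B) :=
    hτ0.eventually (eventually_le_nhds (by positivity))
  have e3 : ∀ᶠ n in atTop, τn n * lam₀ ≤ 1 := by
    rcases eq_or_lt_of_le hlam₀ with h0 | h0
    · exact Eventually.of_forall fun n => by rw [← h0, mul_zero]; norm_num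
    · have := hτ0.eventually (eventually_le_nhds (show (0:ℝ) < 1 / lam₀ by positivity))
      filter_upwards [this] with n hn'
      have := mul_le_mul_of_nonneg_right hn' h0.le
      rwa [one_div_mul_cancel h0.ne'] at this
  obtain ⟨N, hN⟩ := eventually_atTop.mp (e1.and (e2.and e3))
  have hkey : ∀ n : ℕ, ‖h - hn (n + N)‖ ≤ 1 ∧ τn (n + N) ≤ c / (4 * B) ∧
      τn (n + N) * lam₀ ≤ 1 := fun n => hN (n + N) (by omega)
  have hτB : ∀ n, τn (n + N) * B ≤ c / 4 := by
    intro n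
    have h1 := mul_le_mul_of_nonneg_right (hkey n).2.1 hB0.le
    have h2 : c / (4 * B) * B = c / 4 := by field_simp
    linarith
  have hτc4 : ∀ n, τn (n + N) ≤ c / 4 := by
    intro n
    have := mul_le_mul_of_nonneg_left hB1 (hτpos (n + N)).le
    have h2 := hτB n
    nlinarith
  have hnnorm : ∀ n, ‖hn (n + N)‖ ≤ B := by
    intro n
    have h1 := abs_norm_sub_norm_le h (hn (n + N))
    rw [abs_le] at h1
    have := (hkey n).1
    simp only [hB]; linarith
  -- the comparison directions stay in U and are bounded below
  have hvU : ∀ n, u + τn (n + N) • h ∈ U := by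
    intro n
    have ht0 : 0 ≤ τn (n + N) * lam₀ := mul_nonneg (hτpos _).le hlam₀
    have ht1 : τn (n + N) * lam₀ ≤ 1 := (hkey n).2.2
    have heq : u + τn (n + N) • h =
        (1 - τn (n + N) * lam₀) • u + (τn (n + N) * lam₀) • w := by
      rw [hh]; module
    rw [heq]
    exact hU_convex hu hw (by linarith) ht0 (by ring)
  have hvlb : ∀ n, ∀ᵐ y ∂η, c / 2 ≤ (u + τn (n + N) • h : Lp ℝ ⊤ η) y := by
    intro n
    filter_upwards [huc, aux_Lp_top_ae_bound h, Lp.coeFn_add u (τn (n + N) • h),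
      Lp.coeFn_smul (τn (n + N)) h] with y k1 k2 k3 k4
    rw [k3]
    simp only [Pi.add_apply]
    rw [k4]
    simp only [Pi.smul_apply, smul_eq_mul]
    rw [abs_le] at k2
    have h5 : τn (n + N) * (-‖h‖) ≤ τn (n + N) * h y :=
      mul_le_mul_of_nonneg_left k2.1 (hτpos _).le
    have h6 : τn (n + N) * ‖h‖ ≤ τn (n + N) * B :=
      mul_le_mul_of_nonneg_left (by simp only [hB]; linarith) (hτpos _).le
    have h7 := hτB n
    nlinarith
  -- the three Lipschitz-type estimates
  have est1 : ∀ n, ∀ᵐ x ∂μ,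
      c * |(M (u + τn (n + N) • hn (n + N)) : Lp ℝ 2 μ) x - (M u : Lp ℝ 2 μ) x| ≤
        (τn (n + N) * B) * (M u : Lp ℝ 2 μ) x := by
    intro n
    refine hlip u hu _ (hUmem (n + N)) c hc huc (τn (n + N) * B) ?_
      (lt_of_le_of_lt (hτB n) (by linarith))
    have heq : u + τn (n + N) • hn (n + N) - u = τn (n + N) • hn (n + N) := by abel
    rw [heq, norm_smul, Real.norm_eq_abs, abs_of_pos (hτpos _)]
    exact mul_le_mul_of_nonneg_left (hnnorm n) (hτpos _).le
  have est2 : ∀ n, ∀ᵐ x ∂μ,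
      c * |(M (u + τn (n + N) • h) : Lp ℝ 2 μ) x - (M u : Lp ℝ 2 μ) x| ≤
        (τn (n + N) * B) * (M u : Lp ℝ 2 μ) x := by
    intro n
    refine hlip u hu _ (hvU n) c hc huc (τn (n + N) * B) ?_
      (lt_of_le_of_lt (hτB n) (by linarith))
    have heq : u + τn (n + N) • h - u = τn (n + N) • h := by abel
    rw [heq, norm_smul, Real.norm_eq_abs, abs_of_pos (hτpos _)]
    exact mul_le_mul_of_nonneg_left (by simp only [hB]; linarith [norm_nonneg h]) (hτpos _).le
  have est3 : ∀ n, ∀ᵐ x ∂μ,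
      (c / 2) * |(M (u + τn (n + N) • hn (n + N)) : Lp ℝ 2 μ) x -
          (M (u + τn (n + N) • h) : Lp ℝ 2 μ) x| ≤
        (τn (n + N) * ‖h - hn (n + N)‖) * (M (u + τn (n + N) • h) : Lp ℝ 2 μ) x := by
    intro n
    refine hlip _ (hvU n) _ (hUmem (n + N)) (c / 2) (by linarith) (hvlb n)
      (τn (n + N) * ‖h - hn (n + N)‖) ?_ ?_
    · have heq : u + τn (n + N) • hn (n + N) - (u + τn (n + N) • h) =
          τn (n + N) • (hn (n + N) - h) := by module
      rw [heq, norm_smul, Real.norm_eq_abs, abs_of_pos (hτpos _), norm_sub_rev]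
    · calc τn (n + N) * ‖h - hn (n + N)‖ ≤ τn (n + N) * 1 :=
            mul_le_mul_of_nonneg_left (hkey n).1 (hτpos _).le
      _ ≤ c / 4 := by rw [mul_one]; exact hτc4 n
      _ < c / 2 := by linarith
  -- coercion identities
  have cD : ∀ n, ∀ᵐ x ∂μ,
      (((τn (n + N))⁻¹ • (M (u + τn (n + N) • hn (n + N)) - M u) : Lp ℝ 2 μ)) x =
        (τn (n + N))⁻¹ * ((M (u + τn (n + N) • hn (n + N)) : Lp ℝ 2 μ) x -
          (M u : Lp ℝ 2 μ) x) := by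
    intro n
    filter_upwards [Lp.coeFn_smul (τn (n + N))⁻¹ (M (u + τn (n + N) • hn (n + N)) - M u),
      Lp.coeFn_sub (M (u + τn (n + N) • hn (n + N))) (M u)] with x k1 k2
    rw [k1]
    simp only [Pi.smul_apply, smul_eq_mul]
    rw [k2]
    simp
  have cD' : ∀ n, ∀ᵐ x ∂μ,
      (((τn (n + N))⁻¹ • (M (u + τn (n + N) • h) - M u) : Lp ℝ 2 μ)) x =
        (τn (n + N))⁻¹ * ((M (u + τn (n + N) • h) : Lp ℝ 2 μ) x - (M u : Lp ℝ 2 μ) x) := by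
    intro n
    filter_upwards [Lp.coeFn_smul (τn (n + N))⁻¹ (M (u + τn (n + N) • h) - M u),
      Lp.coeFn_sub (M (u + τn (n + N) • h)) (M u)] with x k1 k2
    rw [k1]
    simp only [Pi.smul_apply, smul_eq_mul]
    rw [k2]
    simp
  -- pointwise convergence from the fixed-direction hypothesis
  have hσ0 : Tendsto (fun n => τn (n + N)) atTop (𝓝 0) := hτ0.comp (tendsto_add_atTop_nat N)
  have hptMd : ∀ᵐ x ∂μ, Tendsto
      (fun n => (((τn (n + N))⁻¹ • (M (u + τn (n + N) • h) - M u) : Lp ℝ 2 μ)) x)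
      atTop (𝓝 ((Md : Lp ℝ 2 μ) x)) :=
    hMd_lim (fun n => τn (n + N)) (fun n => hτpos _) hσ0 hvU
  -- dominated convergence for the shifted sequence
  have final : Tendsto (fun n => ∫ x,
      z x * ((((τn (n + N))⁻¹ • (M (u + τn (n + N) • hn (n + N)) - M u) : Lp ℝ 2 μ) x) -
        (Md : Lp ℝ 2 μ) x) ∂μ) atTop (𝓝 (0 : ℝ)) := by
    have hDCT := tendsto_integral_of_dominated_convergence (μ := μ)
      (F := fun n x => z x *
        ((((τn (n + N))⁻¹ • (M (u + τn (n + N) • hn (n + N)) - M u) : Lp ℝ 2 μ) x) -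
          (Md : Lp ℝ 2 μ) x))
      (f := fun _ => (0 : ℝ)) (bound := fun x => |z x| * (B * C / c + C'))
      ?_ ?_ ?_ ?_
    · simpa using hDCT
    · intro n
      exact hz.1.mul ((Lp.aestronglyMeasurable _).sub (Lp.aestronglyMeasurable Md))
    · exact hz.abs.mul_const _
    · intro n
      filter_upwards [cD n, est1 n, hMuC, hMu0ae, hMdC] with x k1 k2 k3 k4 k5
      rw [Real.norm_eq_abs, abs_mul, k1]
      have hτp := hτpos (n + N)
      have hΔ : |(M (u + τn (n + N) • hn (n + N)) : Lp ℝ 2 μ) x - (M u : Lp ℝ 2 μ) x| ≤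
          τn (n + N) * B * (M u : Lp ℝ 2 μ) x / c := by
        rw [le_div_iff₀ hc]; linarith [k2]
      have h7 : |(τn (n + N))⁻¹ * ((M (u + τn (n + N) • hn (n + N)) : Lp ℝ 2 μ) x -
          (M u : Lp ℝ 2 μ) x)| ≤ B * C / c := by
        rw [abs_mul, abs_of_pos (inv_pos.mpr hτp)]
        have q4 := mul_le_mul_of_nonneg_left hΔ (inv_pos.mpr hτp).le
        have q5 : (τn (n + N))⁻¹ * (τn (n + N) * B * (M u : Lp ℝ 2 μ) x / c) =
            B * (M u : Lp ℝ 2 μ) x / c := by field_simp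
        have q6 : B * (M u : Lp ℝ 2 μ) x / c ≤ B * C / c := by
          gcongr
          exact (abs_le.mp k3).2
        linarith
      have h8 : |(τn (n + N))⁻¹ * ((M (u + τn (n + N) • hn (n + N)) : Lp ℝ 2 μ) x -
          (M u : Lp ℝ 2 μ) x) - (Md : Lp ℝ 2 μ) x| ≤ B * C / c + C' := by
        calc |(τn (n + N))⁻¹ * ((M (u + τn (n + N) • hn (n + N)) : Lp ℝ 2 μ) x -
              (M u : Lp ℝ 2 μ) x) - (Md : Lp ℝ 2 μ) x| ≤
            |(τn (n + N))⁻¹ * ((M (u + τn (n + N) • hn (n + N)) : Lp ℝ 2 μ) x -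
              (M u : Lp ℝ 2 μ) x)| + |(Md : Lp ℝ 2 μ) x| := abs_sub _ _
        _ ≤ B * C / c + C' := add_le_add h7 k5
      exact mul_le_mul_of_nonneg_left h8 (abs_nonneg _)
    · -- pointwise a.e. convergence to 0
      filter_upwards [hptMd, ae_all_iff.mpr cD, ae_all_iff.mpr cD', ae_all_iff.mpr est2,
        ae_all_iff.mpr est3, hMuC, hMu0ae] with x k1 k2 k3 k4 k5 k6 k7
      have main : Tendsto (fun n =>
          ((((τn (n + N))⁻¹ • (M (u + τn (n + N) • hn (n + N)) - M u) : Lp ℝ 2 μ) x) -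
            (Md : Lp ℝ 2 μ) x)) atTop (𝓝 0) := by
        have hdecomp : ∀ n,
            ((((τn (n + N))⁻¹ • (M (u + τn (n + N) • hn (n + N)) - M u) : Lp ℝ 2 μ) x) -
              (Md : Lp ℝ 2 μ) x) =
            (τn (n + N))⁻¹ * ((M (u + τn (n + N) • hn (n + N)) : Lp ℝ 2 μ) x -
              (M (u + τn (n + N) • h) : Lp ℝ 2 μ) x) +
            (((((τn (n + N))⁻¹ • (M (u + τn (n + N) • h) - M u) : Lp ℝ 2 μ)) x) -
              (Md : Lp ℝ 2 μ) x) := by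
          intro n
          rw [k2 n, k3 n]; ring
        have t1 : Tendsto (fun n => (τn (n + N))⁻¹ *
            ((M (u + τn (n + N) • hn (n + N)) : Lp ℝ 2 μ) x -
              (M (u + τn (n + N) • h) : Lp ℝ 2 μ) x)) atTop (𝓝 0) := by
          apply squeeze_zero_norm (a := fun n => 4 * C / c * ‖h - hn (n + N)‖)
          · intro n
            have hτp := hτpos (n + N)
            have q1 : c * ((M (u + τn (n + N) • h) : Lp ℝ 2 μ) x - (M u : Lp ℝ 2 μ) x) ≤
                (τn (n + N) * B) * (M u : Lp ℝ 2 μ) x :=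
              le_trans (mul_le_mul_of_nonneg_left (le_abs_self _) hc.le) (k4 n)
            have q2 : (τn (n + N) * B) * (M u : Lp ℝ 2 μ) x ≤ c / 4 * (M u : Lp ℝ 2 μ) x :=
              mul_le_mul_of_nonneg_right (hτB n) k7
            have hMv : (M (u + τn (n + N) • h) : Lp ℝ 2 μ) x ≤ 2 * C := by
              have q7 := mul_le_mul_of_nonneg_left ((abs_le.mp k6).2) hc.le
              have q8 : c * (M (u + τn (n + N) • h) : Lp ℝ 2 μ) x ≤
                  c * C + c / 4 * C := by linarith [le_trans q1 q2, q7]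
              nlinarith [q8, mul_nonneg hc.le hC0, hc]
            rw [Real.norm_eq_abs, abs_mul, abs_of_pos (inv_pos.mpr hτp)]
            have q3 : |(M (u + τn (n + N) • hn (n + N)) : Lp ℝ 2 μ) x -
                (M (u + τn (n + N) • h) : Lp ℝ 2 μ) x| ≤
                2 * (τn (n + N) * ‖h - hn (n + N)‖) *
                  (M (u + τn (n + N) • h) : Lp ℝ 2 μ) x / c := by
              rw [le_div_iff₀ hc]; linarith [k5 n]
            have q4 := mul_le_mul_of_nonneg_left q3 (inv_pos.mpr hτp).le
            have q5 : (τn (n + N))⁻¹ * (2 * (τn (n + N) * ‖h - hn (n + N)‖) *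
                (M (u + τn (n + N) • h) : Lp ℝ 2 μ) x / c) =
                2 * ‖h - hn (n + N)‖ * (M (u + τn (n + N) • h) : Lp ℝ 2 μ) x / c := by
              field_simp
            have q6 : 2 * ‖h - hn (n + N)‖ * (M (u + τn (n + N) • h) : Lp ℝ 2 μ) x / c ≤
                4 * C / c * ‖h - hn (n + N)‖ := by
              rw [div_le_iff₀ hc, mul_assoc, mul_comm (4 * C / c), ← mul_assoc]
              have q8 : 2 * ‖h - hn (n + N)‖ * (M (u + τn (n + N) • h) : Lp ℝ 2 μ) x ≤
                  2 * ‖h - hn (n + N)‖ * (2 * C) :=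
                mul_le_mul_of_nonneg_left hMv (by positivity)
              have q9 : ‖h - hn (n + N)‖ * (4 * C / c) * c = 4 * C * ‖h - hn (n + N)‖ := by
                field_simp
              nlinarith [norm_nonneg (h - hn (n + N))]
            linarith
          · have := (hhnlim.comp (tendsto_add_atTop_nat N)).const_mul (4 * C / c)
            simpa using this
        have t2 : Tendsto (fun n =>
            (((((τn (n + N))⁻¹ • (M (u + τn (n + N) • h) - M u) : Lp ℝ 2 μ)) x) -
              (Md : Lp ℝ 2 μ) x)) atTop (𝓝 0) := by
          simpa using k1.sub (tendsto_const_nhds (x := (Md : Lp ℝ 2 μ) x))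
        have := t1.add t2
        rw [show (fun n =>
            ((((τn (n + N))⁻¹ • (M (u + τn (n + N) • hn (n + N)) - M u) : Lp ℝ 2 μ) x) -
              (Md : Lp ℝ 2 μ) x)) = _ from funext hdecomp]
        simpa using this
      have := main.const_mul (z x)
      simpa using this
  exact (Filter.tendsto_add_atTop_iff_nat N).mp final
end

section
/- Suppose Assumption (C) holds. Then the fixed-point problem (F) is uniquely solvable for every u ∈ U: there is exactly one y ∈ L²(X) with y = S(Φ(y), u). In particular, the minimal and maximal solution maps coincide, m(u) = M(u) for all u ∈ U. -/
open MeasureTheory Filter Topology ENNReal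

/-- Proposition 5.2 of the paper: under Assumption (C), the
fixed-point problem (F) is uniquely solvable for every `u ∈ U`, and the minimal and
maximal solution maps coincide. -/
theorem stmt_10
    {X : Type*} [MeasurableSpace X] {μ : Measure X} [μ.IsComplete]
    {Y : Type*} [MeasurableSpace Y] {η : Measure Y} [η.IsComplete]
    {V : Type*} [AddCommGroup V] [PartialOrder V] [Module ℝ V]
    (P : Set V) (hP_convex : Convex ℝ P) (hP_zero : (0 : V) ∈ P)
    (hP_order : ∀ p₁ ∈ P, ∀ p₂ ∈ P, ∀ lam ∈ Set.Icc (0 : ℝ) 1,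
      lam • p₁ ≤ lam • p₁ + (1 - lam) • p₂)
    (U : Set (Lp ℝ ⊤ η)) (hU_convex : Convex ℝ U) (hU_zero : (0 : Lp ℝ ⊤ η) ∈ U)
    (hU_nonneg : ∀ u ∈ U, 0 ≤ u)
    (S : V → Lp ℝ ⊤ η → Lp ℝ 2 μ)
    (hS_nonneg : ∀ p : V, ∀ u ∈ U, 0 ≤ S p u)
    (hS_mono_p : ∀ u ∈ U, ∀ p₁ p₂ : V, p₁ ≤ p₂ → S p₁ u ≤ S p₂ u)
    (hS_mono_u : ∀ p ∈ P, ∀ u₁ ∈ U, ∀ u₂ ∈ U, u₁ ≤ u₂ → S p u₁ ≤ S p u₂)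
    (hS_concave : ∀ p₁ ∈ P, ∀ p₂ ∈ P, ∀ u₁ ∈ U, ∀ u₂ ∈ U,
      ∀ lam ∈ Set.Icc (0 : ℝ) 1,
      lam • S p₁ u₁ + (1 - lam) • S p₂ u₂ ≤
        S (lam • p₁ + (1 - lam) • p₂) (lam • u₁ + (1 - lam) • u₂))
    (hS_top : ∀ p ∈ P, ∀ u ∈ U, MemLp (⇑(S p u)) ⊤ μ)
    (Φ : Lp ℝ 2 μ → V)
    (hΦ_mem : ∀ v, Φ v ∈ P)
    (hΦ_mono : ∀ v₁ v₂ : Lp ℝ 2 μ, v₁ ≤ v₂ → Φ v₁ ≤ Φ v₂)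
    (ε : ℝ) (hε : 0 < ε)
    (hΦ_concave : ∀ v₁ v₂ : Lp ℝ 2 μ,
      (∀ᵐ x ∂μ, -ε ≤ v₁ x) → (∀ᵐ x ∂μ, -ε ≤ v₂ x) →
      ∀ lam ∈ Set.Icc (0 : ℝ) 1,
      lam • Φ v₁ + (1 - lam) • Φ v₂ ≤ Φ (lam • v₁ + (1 - lam) • v₂))
    (m M : Lp ℝ ⊤ η → Lp ℝ 2 μ)
    (hm_sol : ∀ u ∈ U, m u = S (Φ (m u)) u)
    (hm_min : ∀ u ∈ U, ∀ v : Lp ℝ 2 μ, S (Φ v) u ≤ v → m u ≤ v)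
    (hM_sol : ∀ u ∈ U, M u = S (Φ (M u)) u)
    (hM_max : ∀ u ∈ U, ∀ v : Lp ℝ 2 μ, v ≤ S (Φ v) u → v ≤ M u) :
    ∀ u ∈ U, (∃! y : Lp ℝ 2 μ, y = S (Φ y) u) ∧ m u = M u := by

  -- Key lemma: any two solutions `y`, `ybar` satisfy `ybar ≤ y`.
  have key : ∀ u ∈ U, ∀ y ybar : Lp ℝ 2 μ,
      y = S (Φ y) u → ybar = S (Φ ybar) u → ybar ≤ y := by
    intro u hu y ybar hy hybar
    have smul_nn : ∀ (a : ℝ), 0 ≤ a → ∀ f : Lp ℝ 2 μ, 0 ≤ f → 0 ≤ a • f := by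
      intro a ha f hf
      rw [← Lp.coeFn_le]
      have hf' := (Lp.coeFn_le (0 : Lp ℝ 2 μ) f).2 hf
      filter_upwards [hf', Lp.coeFn_smul a f, Lp.coeFn_zero ℝ 2 μ] with x h1 h2 h3
      rw [h2, h3]
      rw [h3] at h1
      have : (0:ℝ) ≤ f x := h1
      simpa using mul_nonneg ha this
    have hy0 : (0 : Lp ℝ 2 μ) ≤ y := hy ▸ hS_nonneg (Φ y) u hu
    have hybar0 : (0 : Lp ℝ 2 μ) ≤ ybar := hybar ▸ hS_nonneg (Φ ybar) u hu
    -- `ybar` is essentially bounded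
    have hmem : MemLp (⇑ybar) ⊤ μ := by
      rw [hybar]; exact hS_top (Φ ybar) (hΦ_mem ybar) u hu
    set C : ℝ := max (eLpNorm (⇑ybar) ⊤ μ).toReal 1 with hC
    have hC1 : (1 : ℝ) ≤ C := le_max_right _ _
    have hC0 : (0 : ℝ) < C := lt_of_lt_of_le one_pos hC1
    have hybarC : ∀ᵐ x ∂μ, ybar x ≤ C := by
      have h1 : ∀ᵐ x ∂μ, ‖ybar x‖₊ ≤ eLpNormEssSup (⇑ybar) μ :=
        ae_le_eLpNormEssSup
      have hfin : eLpNormEssSup (⇑ybar) μ ≠ ⊤ := by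
        have := hmem.2
        rwa [eLpNorm_exponent_top, lt_top_iff_ne_top] at this
      filter_upwards [h1] with x hx
      have h2 : ‖ybar x‖ ≤ (eLpNormEssSup (⇑ybar) μ).toReal := by
        have := ENNReal.toReal_mono hfin hx
        simpa using this
      calc ybar x ≤ ‖ybar x‖ := le_abs_self _
        _ ≤ (eLpNormEssSup (⇑ybar) μ).toReal := h2
        _ ≤ C := by rw [hC, eLpNorm_exponent_top]; exact le_max_left _ _
    set c : ℝ := ε / C with hc
    have hcpos : 0 < c := div_pos hε hC0
    set w : Lp ℝ 2 μ := (-c) • ybar with hw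
    have hweps : ∀ᵐ x ∂μ, -ε ≤ w x := by
      filter_upwards [Lp.coeFn_smul (-c) ybar, hybarC] with x hx hxC
      rw [hx]
      simp only [Pi.smul_apply, smul_eq_mul]
      have : c * ybar x ≤ c * C := mul_le_mul_of_nonneg_left hxC hcpos.le
      have hcC : c * C = ε := by rw [hc]; field_simp
      nlinarith
    have hybareps : ∀ᵐ x ∂μ, -ε ≤ ybar x := by
      have := (Lp.coeFn_le (0 : Lp ℝ 2 μ) ybar).2 hybar0
      filter_upwards [this, Lp.coeFn_zero ℝ 2 μ] with x hx hx0
      have : (0:ℝ) ≤ ybar x := by rw [hx0] at hx; exact hx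
      linarith
    -- the sequence of coefficients
    set r : ℝ := 1 / (1 + c) with hr
    have h1c : (0:ℝ) < 1 + c := by linarith
    have hr0 : 0 < r := by positivity
    have hr1 : r < 1 := by
      rw [hr, div_lt_one h1c]; linarith
    set lam : ℕ → ℝ := fun n => 1 - r ^ n with hlam
    have hlam_mem : ∀ n, lam n ∈ Set.Icc (0:ℝ) 1 := by
      intro n
      have h1 : 0 < r ^ n := pow_pos hr0 n
      have h2 : r ^ n ≤ 1 := pow_le_one₀ hr0.le hr1.le
      constructor <;> simp only [hlam] <;> linarith
    have hrc : r * (1 + c) = 1 := by rw [hr]; field_simp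
    have hrec : ∀ n, lam (n + 1) = (lam n + c) / (1 + c) := by
      intro n
      simp only [hlam]
      rw [eq_div_iff h1c.ne']
      linear_combination (-(r ^ n)) * hrc
    -- main induction: lam n • ybar ≤ y
    have hind : ∀ n, lam n • ybar ≤ y := by
      intro n
      induction n with
      | zero => simpa [hlam] using hy0
      | succ n ih =>
        set θ : ℝ := lam (n + 1) with hθ
        have hθmem : θ ∈ Set.Icc (0:ℝ) 1 := hlam_mem (n + 1)
        -- convex combination identity: θ • ybar + (1 - θ) • w = lam n • ybar
        have hcomb : θ • ybar + (1 - θ) • w = lam n • ybar := by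
          rw [hw, smul_smul, ← add_smul]
          congr 1
          rw [hθ, hrec n]
          field_simp
          ring
        have hΦc : θ • Φ ybar + (1 - θ) • Φ w ≤ Φ (lam n • ybar) := by
          have := hΦ_concave ybar w hybareps hweps θ hθmem
          rwa [hcomb] at this
        have hScomb : θ • S (Φ ybar) u + (1 - θ) • S (Φ w) u ≤
            S (θ • Φ ybar + (1 - θ) • Φ w) u := by
          have := hS_concave (Φ ybar) (hΦ_mem ybar) (Φ w) (hΦ_mem w) u hu u hu θ hθmem
          have hcu : θ • u + (1 - θ) • u = u := by
            rw [← add_smul]; simp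
          rwa [hcu] at this
        have step1 : θ • ybar ≤ θ • S (Φ ybar) u + (1 - θ) • S (Φ w) u := by
          rw [← hybar]
          exact le_add_of_nonneg_right
            (smul_nn (1 - θ) (by linarith [hθmem.2]) _ (hS_nonneg (Φ w) u hu))
        calc θ • ybar ≤ S (θ • Φ ybar + (1 - θ) • Φ w) u := le_trans step1 hScomb
          _ ≤ S (Φ (lam n • ybar)) u := hS_mono_p u hu _ _ hΦc
          _ ≤ S (Φ y) u := hS_mono_p u hu _ _ (hΦ_mono _ _ ih)
          _ = y := hy.symm
    -- pass to the limit
    have hlamlim : Tendsto lam atTop (𝓝 1) := by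
      have h0 : Tendsto (fun n => r ^ n) atTop (𝓝 0) :=
        tendsto_pow_atTop_nhds_zero_of_lt_one hr0.le hr1
      have := h0.const_sub 1
      simpa [hlam] using this
    have hae : ∀ᵐ x ∂μ, ∀ n : ℕ, lam n * ybar x ≤ y x := by
      rw [ae_all_iff]
      intro n
      have h1 := (Lp.coeFn_le (lam n • ybar) y).2 (hind n)
      filter_upwards [h1, Lp.coeFn_smul (lam n) ybar] with x hx hsx
      rw [hsx] at hx
      simpa using hx
    rw [← Lp.coeFn_le]
    filter_upwards [hae] with x hx
    have hlim : Tendsto (fun n => lam n * ybar x) atTop (𝓝 (ybar x)) := by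
      have := hlamlim.mul_const (ybar x)
      simpa using this
    exact le_of_tendsto hlim (Eventually.of_forall hx)
  intro u hu
  have hmM : m u = M u := by
    apply le_antisymm
    · exact key u hu (M u) (m u) (hM_sol u hu) (hm_sol u hu)
    · exact key u hu (m u) (M u) (hm_sol u hu) (hM_sol u hu)
  refine ⟨⟨M u, hM_sol u hu, ?_⟩, hmM⟩
  intro y hy
  exact le_antisymm (key u hu (M u) y (hM_sol u hu) hy)
    (key u hu y (M u) hy (hM_sol u hu))
end

section
/- Suppose Assumption (C) holds with constant ε > 0 and define Ψ : L²(X) × U → L²₊(X) by Ψ(v, u) := S(Φ(v), u). Then for all λ ∈ [0, 1], all u₁, u₂ ∈ U, and all v₁, v₂ ∈ L²(X) with v₁ ≥ −ε and v₂ ≥ −ε μ-a.e., it holds λΨ(v₁, u₁) + (1 − λ)Ψ(v₂, u₂) ≤ Ψ(λv₁ + (1 − λ)v₂, λu₁ + (1 − λ)u₂) μ-a.e. in X. -/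
open MeasureTheory Filter Topology ENNReal

/-- first part of Lemma 5.3 of the paper: under Assumption (C) with
constant `ε > 0`, the composition `Ψ(v, u) := S(Φ(v), u)` is pointwise μ-a.e. concave on
`{v ∈ L²(X) : v ≥ −ε} × U`. -/
theorem stmt_11
    {X : Type*} [MeasurableSpace X] {μ : Measure X} [μ.IsComplete]
    {Y : Type*} [MeasurableSpace Y] {η : Measure Y} [η.IsComplete]
    {V : Type*} [AddCommGroup V] [PartialOrder V] [Module ℝ V]
    (P : Set V) (hP_convex : Convex ℝ P) (hP_zero : (0 : V) ∈ P)
    (hP_order : ∀ p₁ ∈ P, ∀ p₂ ∈ P, ∀ lam ∈ Set.Icc (0 : ℝ) 1,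
      lam • p₁ ≤ lam • p₁ + (1 - lam) • p₂)
    (U : Set (Lp ℝ ⊤ η)) (hU_convex : Convex ℝ U) (hU_zero : (0 : Lp ℝ ⊤ η) ∈ U)
    (hU_nonneg : ∀ u ∈ U, 0 ≤ u)
    (S : V → Lp ℝ ⊤ η → Lp ℝ 2 μ)
    (hS_nonneg : ∀ p : V, ∀ u ∈ U, 0 ≤ S p u)
    (hS_mono_p : ∀ u ∈ U, ∀ p₁ p₂ : V, p₁ ≤ p₂ → S p₁ u ≤ S p₂ u)
    (hS_mono_u : ∀ p ∈ P, ∀ u₁ ∈ U, ∀ u₂ ∈ U, u₁ ≤ u₂ → S p u₁ ≤ S p u₂)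
    (hS_concave : ∀ p₁ ∈ P, ∀ p₂ ∈ P, ∀ u₁ ∈ U, ∀ u₂ ∈ U,
      ∀ lam ∈ Set.Icc (0 : ℝ) 1,
      lam • S p₁ u₁ + (1 - lam) • S p₂ u₂ ≤
        S (lam • p₁ + (1 - lam) • p₂) (lam • u₁ + (1 - lam) • u₂))
    (hS_top : ∀ p ∈ P, ∀ u ∈ U, MemLp (⇑(S p u)) ⊤ μ)
    (Φ : Lp ℝ 2 μ → V)
    (hΦ_mem : ∀ v, Φ v ∈ P)
    (hΦ_mono : ∀ v₁ v₂ : Lp ℝ 2 μ, v₁ ≤ v₂ → Φ v₁ ≤ Φ v₂)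
    (ε : ℝ) (hε : 0 < ε)
    (hΦ_concave : ∀ v₁ v₂ : Lp ℝ 2 μ,
      (∀ᵐ x ∂μ, -ε ≤ v₁ x) → (∀ᵐ x ∂μ, -ε ≤ v₂ x) →
      ∀ lam ∈ Set.Icc (0 : ℝ) 1,
      lam • Φ v₁ + (1 - lam) • Φ v₂ ≤ Φ (lam • v₁ + (1 - lam) • v₂))
 :
    ∀ lam ∈ Set.Icc (0 : ℝ) 1, ∀ u₁ ∈ U, ∀ u₂ ∈ U, ∀ v₁ v₂ : Lp ℝ 2 μ,
      (∀ᵐ x ∂μ, -ε ≤ v₁ x) → (∀ᵐ x ∂μ, -ε ≤ v₂ x) →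
      lam • S (Φ v₁) u₁ + (1 - lam) • S (Φ v₂) u₂ ≤
        S (Φ (lam • v₁ + (1 - lam) • v₂)) (lam • u₁ + (1 - lam) • u₂) := by
  intro lam hlam u₁ hu₁ u₂ hu₂ v₁ v₂ hv₁ hv₂
  have hu : lam • u₁ + (1 - lam) • u₂ ∈ U :=
    hU_convex hu₁ hu₂ hlam.1 (by linarith [hlam.2]) (by ring)
  refine le_trans
    (hS_concave _ (hΦ_mem v₁) _ (hΦ_mem v₂) _ hu₁ _ hu₂ lam hlam) ?_
  exact hS_mono_p _ hu _ _ (hΦ_concave v₁ v₂ hv₁ hv₂ lam hlam)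
end

section
/- Suppose Assumption (C) holds and define Ψ : L²(X) × U → L²₊(X) by Ψ(v, u) := S(Φ(v), u). Then for every pair (v, u) ∈ L²₊(X) × U and every pair (h₁, h₂) ∈ L^{[2,∞]}(X) × ℝ⁺(U − u) with u + τ₀h₂ ∈ U for some τ₀ > 0, there exists a unique element Ψ'((v, u); (h₁, h₂)) of L⁰(X, (−∞, ∞]) such that the difference quotients (Ψ(v + τh₁, u + τh₂) − Ψ(v, u))/τ ∈ L²(X), τ ∈ (0, τ₀), converge pointwise μ-a.e. to Ψ'((v, u); (h₁, h₂)) along every sequence {τ_n} ⊂ (0, τ₀) with τ_n → 0. -/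
open MeasureTheory Filter Topology ENNReal

lemma aux_limit {X : Type*} [MeasurableSpace X] {μ : Measure X}
    (g : ℝ → Lp ℝ 2 μ) (τ₀ τ₁ : ℝ) (hτ₁ : 0 < τ₁) (hτ₁0 : τ₁ ≤ τ₀)
    (key : ∀ a b : ℝ, 0 < a → a ≤ b → b ≤ τ₁ → ∀ᵐ x ∂μ, (g b) x ≤ (g a) x) :
    ∃ δ : X → EReal, Measurable δ ∧ (∀ x, δ x ≠ ⊥) ∧
      ∀ τn : ℕ → ℝ, (∀ n, τn n ∈ Set.Ioo (0:ℝ) τ₀) → Tendsto τn atTop (𝓝 0) →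
        ∀ᵐ x ∂μ, Tendsto (fun n => (((g (τn n)) x : ℝ) : EReal)) atTop (𝓝 (δ x)) := by
  classical
  set σ : ℕ → ℝ := fun k => τ₁ / 2 ^ k with hσ
  have hσ_pos : ∀ k, 0 < σ k := fun k => div_pos hτ₁ (by positivity)
  have hσ_le : ∀ k, σ k ≤ τ₁ := by
    intro k
    rw [hσ]
    exact div_le_self hτ₁.le (one_le_pow₀ one_le_two)
  set m : ℕ → X → ℝ := fun k => (Lp.aestronglyMeasurable (g (σ k))).mk _ with hm
  have hm_meas : ∀ k, Measurable (m k) := fun k =>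
    ((Lp.aestronglyMeasurable (g (σ k))).stronglyMeasurable_mk).measurable
  have hm_ae : ∀ k, (⇑(g (σ k)) : X → ℝ) =ᵐ[μ] m k := fun k =>
    (Lp.aestronglyMeasurable (g (σ k))).ae_eq_mk
  refine ⟨fun x => ⨆ k, ((m k x : ℝ) : EReal), Measurable.iSup
    (fun k => measurable_coe_real_ereal.comp (hm_meas k)), ?_, ?_⟩
  · intro x hbot
    have h0 : ((m 0 x : ℝ) : EReal) ≤ ⨆ k, ((m k x : ℝ) : EReal) := le_iSup (fun k => ((m k x : ℝ) : EReal)) 0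
    have hbot' : (⨆ k, ((m k x : ℝ) : EReal)) = ⊥ := hbot
    rw [hbot', le_bot_iff] at h0
    exact EReal.coe_ne_bot _ h0
  · intro τn hτn hlim
    have E1 : ∀ᵐ x ∂μ, ∀ k, (⇑(g (σ k)) : X → ℝ) x = m k x := ae_all_iff.mpr hm_ae
    have E2 : ∀ᵐ x ∂μ, ∀ n k, σ k ≤ τn n → τn n ≤ τ₁ → (g (τn n)) x ≤ (g (σ k)) x := by
      rw [ae_all_iff]
      intro n
      rw [ae_all_iff]
      intro k
      by_cases h : σ k ≤ τn n ∧ τn n ≤ τ₁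
      · filter_upwards [key (σ k) (τn n) (hσ_pos k) h.1 h.2] with x hx _ _
        exact hx
      · filter_upwards with x h1 h2
        exact absurd ⟨h1, h2⟩ h
    have E3 : ∀ᵐ x ∂μ, ∀ n k, τn n ≤ σ k → (g (σ k)) x ≤ (g (τn n)) x := by
      rw [ae_all_iff]
      intro n
      rw [ae_all_iff]
      intro k
      by_cases h : τn n ≤ σ k
      · filter_upwards [key (τn n) (σ k) (hτn n).1 h (hσ_le k)] with x hx _
        exact hx
      · filter_upwards with x h1
        exact absurd h1 h
    filter_upwards [E1, E2, E3] with x hE1 hE2 hE3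
    have hδeq : (⨆ k, ((m k x : ℝ) : EReal)) = ⨆ k, (((g (σ k)) x : ℝ) : EReal) := by
      exact iSup_congr fun k => by rw [hE1 k]
    rw [hδeq]
    refine tendsto_of_le_liminf_of_limsup_le ?_ ?_ (by isBoundedDefault) (by isBoundedDefault)
    · refine iSup_le fun k => ?_
      refine le_liminf_of_le (by isBoundedDefault) ?_
      have hev : ∀ᶠ n in atTop, τn n ≤ σ k :=
        (hlim.eventually (gt_mem_nhds (hσ_pos k))).mono fun n h => h.le
      filter_upwards [hev] with n hn
      exact EReal.coe_le_coe_iff.mpr (hE3 n k hn)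
    · refine limsup_le_of_le (by isBoundedDefault) ?_
      have hev : ∀ᶠ n in atTop, τn n ≤ τ₁ :=
        (hlim.eventually (gt_mem_nhds hτ₁)).mono fun n h => h.le
      filter_upwards [hev] with n hn
      obtain ⟨k, hk⟩ : ∃ k : ℕ, σ k ≤ τn n := by
        obtain ⟨k, hk⟩ := pow_unbounded_of_one_lt (τ₁ / τn n) (one_lt_two (α := ℝ))
        refine ⟨k, ?_⟩
        rw [hσ]
        rw [div_le_iff₀ (by positivity)]
        rw [div_lt_iff₀ (hτn n).1] at hk
        nlinarith [(hτn n).1]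
      calc (((g (τn n)) x : ℝ) : EReal) ≤ (((g (σ k)) x : ℝ) : EReal) :=
            EReal.coe_le_coe_iff.mpr (hE2 n k hk hn)
        _ ≤ ⨆ j, (((g (σ j)) x : ℝ) : EReal) := le_iSup (fun j => (((g (σ j)) x : ℝ) : EReal)) k



set_option maxHeartbeats 1000000 in
/-- second part of Lemma 5.3 of the paper: under Assumption (C), for
every `(v, u) ∈ L²₊(X) × U` and every direction `(h₁, h₂) ∈ L^{[2,∞]}(X) × ℝ⁺(U − u)`
with `u + τ₀ h₂ ∈ U`, the difference quotients of `Ψ(v, u) := S(Φ(v), u)` converge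
pointwise μ-a.e. to a unique element `Ψ'((v, u); (h₁, h₂))` of `L⁰(X, (−∞, ∞])`
(modeled as an a.e. class of measurable `EReal`-valued functions avoiding `⊥`). -/
theorem stmt_12
    {X : Type*} [MeasurableSpace X] {μ : Measure X} [μ.IsComplete]
    {Y : Type*} [MeasurableSpace Y] {η : Measure Y} [η.IsComplete]
    {V : Type*} [AddCommGroup V] [PartialOrder V] [Module ℝ V]
    (P : Set V) (hP_convex : Convex ℝ P) (hP_zero : (0 : V) ∈ P)
    (hP_order : ∀ p₁ ∈ P, ∀ p₂ ∈ P, ∀ lam ∈ Set.Icc (0 : ℝ) 1,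
      lam • p₁ ≤ lam • p₁ + (1 - lam) • p₂)
    (U : Set (Lp ℝ ⊤ η)) (hU_convex : Convex ℝ U) (hU_zero : (0 : Lp ℝ ⊤ η) ∈ U)
    (hU_nonneg : ∀ u ∈ U, 0 ≤ u)
    (S : V → Lp ℝ ⊤ η → Lp ℝ 2 μ)
    (hS_nonneg : ∀ p : V, ∀ u ∈ U, 0 ≤ S p u)
    (hS_mono_p : ∀ u ∈ U, ∀ p₁ p₂ : V, p₁ ≤ p₂ → S p₁ u ≤ S p₂ u)
    (hS_mono_u : ∀ p ∈ P, ∀ u₁ ∈ U, ∀ u₂ ∈ U, u₁ ≤ u₂ → S p u₁ ≤ S p u₂)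
    (hS_concave : ∀ p₁ ∈ P, ∀ p₂ ∈ P, ∀ u₁ ∈ U, ∀ u₂ ∈ U,
      ∀ lam ∈ Set.Icc (0 : ℝ) 1,
      lam • S p₁ u₁ + (1 - lam) • S p₂ u₂ ≤
        S (lam • p₁ + (1 - lam) • p₂) (lam • u₁ + (1 - lam) • u₂))
    (hS_top : ∀ p ∈ P, ∀ u ∈ U, MemLp (⇑(S p u)) ⊤ μ)
    (Φ : Lp ℝ 2 μ → V)
    (hΦ_mem : ∀ v, Φ v ∈ P)
    (hΦ_mono : ∀ v₁ v₂ : Lp ℝ 2 μ, v₁ ≤ v₂ → Φ v₁ ≤ Φ v₂)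
    (ε : ℝ) (hε : 0 < ε)
    (hΦ_concave : ∀ v₁ v₂ : Lp ℝ 2 μ,
      (∀ᵐ x ∂μ, -ε ≤ v₁ x) → (∀ᵐ x ∂μ, -ε ≤ v₂ x) →
      ∀ lam ∈ Set.Icc (0 : ℝ) 1,
      lam • Φ v₁ + (1 - lam) • Φ v₂ ≤ Φ (lam • v₁ + (1 - lam) • v₂))

    (v : Lp ℝ 2 μ) (hv : 0 ≤ v) (u : Lp ℝ ⊤ η) (hu : u ∈ U)
    (h₁ : Lp ℝ 2 μ) (hh₁ : MemLp (⇑h₁) ⊤ μ)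
    (h₂ : Lp ℝ ⊤ η)
    (hcone : ∃ lam : ℝ, 0 ≤ lam ∧ ∃ w ∈ U, h₂ = lam • (w - u))
    (τ₀ : ℝ) (hτ₀ : 0 < τ₀) (hmem : u + τ₀ • h₂ ∈ U) :
    ∃ δ : X → EReal, Measurable δ ∧ (∀ᵐ x ∂μ, δ x ≠ ⊥) ∧
      (∀ τn : ℕ → ℝ, (∀ n, τn n ∈ Set.Ioo (0 : ℝ) τ₀) →
        Tendsto τn atTop (𝓝 0) →
        ∀ᵐ x ∂μ, Tendsto
          (fun n =>
            ((((τn n)⁻¹ • (S (Φ (v + τn n • h₁)) (u + τn n • h₂) - S (Φ v) u) :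
              Lp ℝ 2 μ) x : ℝ) : EReal))
          atTop (𝓝 (δ x))) ∧
      (∀ δ' : X → EReal, Measurable δ' → (∀ᵐ x ∂μ, δ' x ≠ ⊥) →
        (∀ τn : ℕ → ℝ, (∀ n, τn n ∈ Set.Ioo (0 : ℝ) τ₀) →
          Tendsto τn atTop (𝓝 0) →
          ∀ᵐ x ∂μ, Tendsto
            (fun n =>
              ((((τn n)⁻¹ • (S (Φ (v + τn n • h₁)) (u + τn n • h₂) - S (Φ v) u) :
                Lp ℝ 2 μ) x : ℝ) : EReal))
            atTop (𝓝 (δ' x))) →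
        δ' =ᵐ[μ] δ) := by
  
  classical
  -- essential sup bound for h₁
  set C : ℝ := (eLpNormEssSup (⇑h₁) μ).toReal with hC_def
  have hC0 : 0 ≤ C := ENNReal.toReal_nonneg
  have hfin : eLpNormEssSup (⇑h₁) μ ≠ ⊤ := by
    rw [← eLpNorm_exponent_top]; exact hh₁.2.ne
  have hC_ae : ∀ᵐ x ∂μ, |h₁ x| ≤ C := by
    filter_upwards [MeasureTheory.ae_le_eLpNormEssSup (f := ⇑h₁) (μ := μ)] with x hx
    have h2 : ((‖h₁ x‖₊ : ℝ≥0∞)).toReal ≤ C := ENNReal.toReal_mono hfin hx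
    simpa [Real.norm_eq_abs] using h2
  set τ₁ : ℝ := min τ₀ (ε / (C + 1)) with hτ₁def
  have hτ₁pos : 0 < τ₁ := lt_min hτ₀ (div_pos hε (by linarith))
  have hτ₁τ₀ : τ₁ ≤ τ₀ := min_le_left _ _
  -- membership of u + τ • h₂ in U
  have hUτ : ∀ τ : ℝ, 0 ≤ τ → τ ≤ τ₀ → u + τ • h₂ ∈ U := by
    intro τ h0 h1
    have ht0 : 0 ≤ τ / τ₀ := div_nonneg h0 hτ₀.le
    have ht1 : τ / τ₀ ≤ 1 := (div_le_one hτ₀).mpr h1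
    have hmem2 := hU_convex hu hmem (by linarith : (0:ℝ) ≤ 1 - τ / τ₀) ht0 (by ring)
    have heq : (1 - τ / τ₀) • u + (τ / τ₀) • (u + τ₀ • h₂) = u + τ • h₂ := by
      have h : τ / τ₀ * τ₀ = τ := div_mul_cancel₀ τ hτ₀.ne'
      rw [smul_add, smul_smul, h]; module
    rwa [heq] at hmem2
  -- pointwise nonnegativity of v
  have hv_ae : ∀ᵐ x ∂μ, 0 ≤ v x := by
    have h := (Lp.coeFn_le (0 : Lp ℝ 2 μ) v).mpr hv
    filter_upwards [h, Lp.coeFn_zero (E := ℝ) (p := 2) (μ := μ)] with x h1 h2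
    calc (0:ℝ) = (0 : Lp ℝ 2 μ) x := by rw [h2]; rfl
      _ ≤ v x := h1
  -- lower bound for v + τ • h₁
  have hve : ∀ τ : ℝ, 0 ≤ τ → τ ≤ τ₁ → ∀ᵐ x ∂μ, -ε ≤ (v + τ • h₁) x := by
    intro τ h0 h1
    have hτε : τ * C ≤ ε := by
      have h2 : τ ≤ ε / (C + 1) := le_trans h1 (min_le_right _ _)
      have h3 : (0:ℝ) < C + 1 := by linarith
      have h4 : τ * (C + 1) ≤ ε := by
        rw [le_div_iff₀ h3] at h2; linarith
      nlinarith
    filter_upwards [Lp.coeFn_add v (τ • h₁), Lp.coeFn_smul τ h₁, hv_ae, hC_ae]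
      with x e1 e2 hvx hcx
    rw [e1, Pi.add_apply, e2, Pi.smul_apply, smul_eq_mul]
    have habs : |τ * h₁ x| ≤ τ * C := by
      rw [abs_mul, abs_of_nonneg h0]
      exact mul_le_mul_of_nonneg_left hcx h0
    have := (abs_le.mp habs).1
    linarith
  -- the key monotonicity of difference quotients
  have key : ∀ a b : ℝ, 0 < a → a ≤ b → b ≤ τ₁ →
      ∀ᵐ x ∂μ, (b⁻¹ • (S (Φ (v + b • h₁)) (u + b • h₂) - S (Φ v) u) : Lp ℝ 2 μ) x
        ≤ (a⁻¹ • (S (Φ (v + a • h₁)) (u + a • h₂) - S (Φ v) u) : Lp ℝ 2 μ) x := by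
    intro a b ha hab hbτ
    have hb : 0 < b := lt_of_lt_of_le ha hab
    set lam : ℝ := a / b with hlam
    have hlam0 : 0 ≤ lam := div_nonneg ha.le hb.le
    have hlam1 : lam ≤ 1 := (div_le_one hb).mpr hab
    have hlmem : lam ∈ Set.Icc (0:ℝ) 1 := ⟨hlam0, hlam1⟩
    have hlb : lam * b = a := div_mul_cancel₀ a hb.ne'
    have hv0e : ∀ᵐ x ∂μ, -ε ≤ v x := hv_ae.mono fun x hx => by linarith
    have hΦc := hΦ_concave (v + b • h₁) v (hve b hb.le hbτ) hv0e lam hlmem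
    have hveq : lam • (v + b • h₁) + (1 - lam) • v = v + a • h₁ := by
      rw [smul_add, smul_smul, hlb]; module
    rw [hveq] at hΦc
    have hub : u + b • h₂ ∈ U := hUτ b hb.le (le_trans hbτ hτ₁τ₀)
    have hua : u + a • h₂ ∈ U := hUτ a ha.le (le_trans (hab.trans hbτ) hτ₁τ₀)
    have hSc := hS_concave (Φ (v + b • h₁)) (hΦ_mem _) (Φ v) (hΦ_mem _)
      (u + b • h₂) hub u hu lam hlmem
    have hueq : lam • (u + b • h₂) + (1 - lam) • u = u + a • h₂ := by
      rw [smul_add, smul_smul, hlb]; module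
    rw [hueq] at hSc
    have hSm := hS_mono_p (u + a • h₂) hua _ _ hΦc
    have hfin2 : lam • S (Φ (v + b • h₁)) (u + b • h₂) + (1 - lam) • S (Φ v) u
        ≤ S (Φ (v + a • h₁)) (u + a • h₂) := le_trans hSc hSm
    have hae := (Lp.coeFn_le _ _).mpr hfin2
    filter_upwards [hae,
      Lp.coeFn_add (lam • S (Φ (v + b • h₁)) (u + b • h₂)) ((1 - lam) • S (Φ v) u),
      Lp.coeFn_smul lam (S (Φ (v + b • h₁)) (u + b • h₂)),
      Lp.coeFn_smul (1 - lam) (S (Φ v) u),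
      Lp.coeFn_smul b⁻¹ (S (Φ (v + b • h₁)) (u + b • h₂) - S (Φ v) u),
      Lp.coeFn_smul a⁻¹ (S (Φ (v + a • h₁)) (u + a • h₂) - S (Φ v) u),
      Lp.coeFn_sub (S (Φ (v + b • h₁)) (u + b • h₂)) (S (Φ v) u),
      Lp.coeFn_sub (S (Φ (v + a • h₁)) (u + a • h₂)) (S (Φ v) u)]
      with x e0 e1 e2 e3 e4 e5 e6 e7
    rw [e1, Pi.add_apply, e2, e3, Pi.smul_apply, Pi.smul_apply, smul_eq_mul,
      smul_eq_mul] at e0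
    rw [e4, e5, Pi.smul_apply, Pi.smul_apply, smul_eq_mul, smul_eq_mul, e6, e7,
      Pi.sub_apply, Pi.sub_apply]
    set A : ℝ := (S (Φ (v + b • h₁)) (u + b • h₂)) x
    set B : ℝ := (S (Φ v) u) x
    set D : ℝ := (S (Φ (v + a • h₁)) (u + a • h₂)) x
    rw [inv_mul_eq_div, inv_mul_eq_div, div_le_div_iff₀ hb ha]
    have h6 : b * (lam * A + (1 - lam) * B) = a * A + (b - a) * B := by
      have hba : b * lam = a := by rw [mul_comm]; exact hlb
      linear_combination (A - B) * hba
    have h7 := mul_le_mul_of_nonneg_left e0 hb.le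
    rw [h6] at h7
    linarith
  obtain ⟨δ, hδm, hδbot, hδconv⟩ := aux_limit
    (fun τ => τ⁻¹ • (S (Φ (v + τ • h₁)) (u + τ • h₂) - S (Φ v) u)) τ₀ τ₁ hτ₁pos hτ₁τ₀ key
  refine ⟨δ, hδm, Filter.Eventually.of_forall hδbot, hδconv, ?_⟩
  intro δ' hδ'm hδ'bot hδ'conv
  set s : ℕ → ℝ := fun n => τ₀ / (n + 2) with hs
  have hs_mem : ∀ n, s n ∈ Set.Ioo (0:ℝ) τ₀ := by
    intro n
    constructor
    · positivity
    · rw [hs]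
      have hn2 : (0:ℝ) < (n:ℝ) + 2 := by positivity
      rw [div_lt_iff₀ hn2]
      nlinarith [(show (0:ℝ) ≤ (n:ℝ) from Nat.cast_nonneg n)]
  have hs_lim : Tendsto s atTop (𝓝 0) := by
    have h := (tendsto_const_div_atTop_nhds_zero_nat τ₀).comp (tendsto_add_atTop_nat 2)
    have he : s = fun n : ℕ => τ₀ / ((n + 2 : ℕ) : ℝ) := by
      funext n; rw [hs]; push_cast; ring
    rw [he]; exact h
  have h1 := hδconv s hs_mem hs_lim
  have h2 := hδ'conv s hs_mem hs_lim
  filter_upwards [h1, h2] with x hx1 hx2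
  exact tendsto_nhds_unique hx2 hx1
end
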